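/- arXiv:2401.16495 — 9 statements merged into one kernel-verified Lean document; each statement's English description precedes it below -/
import Mathlib

section
/- Let v ∈ H¹(0,∞) and let r be absolutely continuous on [0,∞) with r(0) > 0 and 0 < θ̲ ≤ r²∂ₓr ≤ θ̄ < ∞ for constants θ̲, θ̄. Then ∫₀^∞ (r²∂ₓr)⁻¹ (∂ₓ(r²v))² dx + 2 r(0) v(0)² = ∫₀^∞ (r²∂ₓr)⁻¹ (r²∂ₓv)² dx + 2 ∫₀^∞ (r²∂ₓr) r⁻² v² dx. -/
/-!
Expanding the square, `(r²r')⁻¹ (∂ₓ(r²v))² = (r²r')⁻¹ (r²∂ₓv)² + 2 r' v² + ∂ₓ(2 r v²)`, and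
`r² r' (r²)⁻¹ v² = r' v²`. The three terms on the right are integrable because `r'`, `r⁻¹` and
`(r²r')⁻¹` are bounded. So `2 r v²` has a limit `L` at infinity and the last term integrates to
`L - 2 r(0) v(0)²`. Finally `L = 0`: since `r' ≤ θ̄ / r(0)²`, `r` grows at most linearly, so
`L > 0` would force `v² ≳ 1/x`, contradicting `v ∈ L²`.
-/

open MeasureTheory Set Filter Topology

lemma monotoneOn_Ici_of_hasDerivAt_nonneg {f f' : ℝ → ℝ} {a : ℝ}
    (hf : ∀ x ∈ Ici a, HasDerivAt f (f' x) x) (hf' : ∀ x ∈ Ici a, 0 ≤ f' x) :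
    MonotoneOn f (Ici a) := by
  refine monotoneOn_of_hasDerivWithinAt_nonneg (f' := f') (convex_Ici a)
    (fun x hx => (hf x hx).continuousAt.continuousWithinAt) (fun x hx => ?_) (fun x hx => ?_) <;>
  rw [interior_Ici] at hx
  exacts [(hf x (mem_Ici.2 hx.le)).hasDerivWithinAt, hf' x (mem_Ici.2 hx.le)]

lemma aestronglyMeasurable_of_forall_hasDerivAt {E : Type*} [NormedAddCommGroup E]
    [NormedSpace ℝ E] [CompleteSpace E] {f f' : ℝ → E} {s : Set ℝ} {μ : Measure ℝ}
    (hs : MeasurableSet s) (hf : ∀ x ∈ s, HasDerivAt f (f' x) x) :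
    AEStronglyMeasurable f' (μ.restrict s) :=
  (aestronglyMeasurable_deriv f _).congr <| (ae_restrict_mem hs).mono fun x hx => (hf x hx).deriv

lemma eq_zero_of_integrableOn_of_tendsto_mul {f ρ : ℝ → ℝ} {a C L : ℝ}
    (hf : IntegrableOn f (Ioi a)) (hρ : ∀ᶠ x in atTop, 0 < ρ x ∧ ρ x ≤ C * x)
    (hlim : Tendsto (fun x => ρ x * f x) atTop (𝓝 L)) : L = 0 := by
  by_contra hL
  have hL' : 0 < |L| := abs_pos.2 hL
  obtain ⟨b, hb⟩ := eventually_atTop.1 <| hρ.and <| (eventually_gt_atTop 0).and <|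
    hlim.abs.eventually (eventually_ge_nhds (half_lt_self hL'))
  -- eventually `x⁻¹ ≤ (2C/|L|) |f x|`, but `x⁻¹` is not integrable at infinity
  refine not_integrableOn_Ioi_inv (a := max a b) <|
    Integrable.mono' ((hf.mono_set (Ioi_subset_Ioi (le_max_left a b))).norm.const_mul
      (2 * C / |L|)) measurable_inv.aestronglyMeasurable ?_
  filter_upwards [ae_restrict_mem measurableSet_Ioi] with x hx
  obtain ⟨⟨hρ0, hρC⟩, hx0, hLx⟩ := hb x (le_max_right a b |>.trans hx.out.le)
  rw [abs_mul, abs_of_pos hρ0, div_le_iff₀ two_pos] at hLx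
  rw [norm_inv, Real.norm_of_nonneg hx0.le, Real.norm_eq_abs, inv_le_iff_one_le_mul₀ hx0]
  have : |L| ≤ 2 * C * x * |f x| := by nlinarith [abs_nonneg (f x)]
  calc (1 : ℝ) = |L| / |L| := (div_self hL'.ne').symm
    _ ≤ 2 * C * x * |f x| / |L| := by gcongr
    _ = 2 * C / |L| * |f x| * x := by ring

lemma integral_Ioi_eq_neg_of_hasDerivAt_mul {ρ f g' : ℝ → ℝ} {a C : ℝ}
    (hderiv : ∀ x ∈ Ici a, HasDerivAt (fun x => ρ x * f x) (g' x) x)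
    (hg' : IntegrableOn g' (Ioi a)) (hf : IntegrableOn f (Ioi a))
    (hρ : ∀ᶠ x in atTop, 0 < ρ x ∧ ρ x ≤ C * x) :
    ∫ x in Ioi a, g' x = -(ρ a * f a) := by
  have hlim := tendsto_limUnder_of_hasDerivAt_of_integrableOn_Ioi
    (fun x hx => hderiv x (mem_Ici_of_Ioi hx)) hg'
  rw [integral_Ioi_of_hasDerivAt_of_tendsto' hderiv hg' hlim,
    eq_zero_of_integrableOn_of_tendsto_mul hf hρ hlim, zero_sub]

lemma ae_restrict_Ioi_mem_Ici {a : ℝ} {μ : Measure ℝ} : ∀ᵐ x ∂(μ.restrict (Ioi a)), x ∈ Ici a :=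
  (ae_restrict_mem measurableSet_Ioi).mono fun _ hx => mem_Ici_of_Ioi hx

structure PinchedWeight (r r' : ℝ → ℝ) (θ₁ θ₂ : ℝ) : Prop where
  hasDerivAt : ∀ x ∈ Ici (0:ℝ), HasDerivAt r (r' x) x
  apply_zero_pos : 0 < r 0
  lower_pos : 0 < θ₁
  lower_le : ∀ x ∈ Ici (0:ℝ), θ₁ ≤ r x ^ 2 * r' x
  le_upper : ∀ x ∈ Ici (0:ℝ), r x ^ 2 * r' x ≤ θ₂

namespace PinchedWeight

variable {r r' : ℝ → ℝ} {θ₁ θ₂ : ℝ} {x : ℝ}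

lemma deriv_pos (hw : PinchedWeight r r' θ₁ θ₂) (hx : x ∈ Ici 0) : 0 < r' x :=
  pos_of_mul_pos_right (hw.lower_pos.trans_le (hw.lower_le x hx)) (sq_nonneg _)

lemma apply_zero_le (hw : PinchedWeight r r' θ₁ θ₂) (hx : x ∈ Ici 0) : r 0 ≤ r x :=
  monotoneOn_Ici_of_hasDerivAt_nonneg hw.hasDerivAt (fun _ hy => (hw.deriv_pos hy).le)
    self_mem_Ici hx hx

lemma apply_pos (hw : PinchedWeight r r' θ₁ θ₂) (hx : x ∈ Ici 0) : 0 < r x :=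
  hw.apply_zero_pos.trans_le (hw.apply_zero_le hx)

lemma deriv_le (hw : PinchedWeight r r' θ₁ θ₂) (hx : x ∈ Ici 0) : r' x ≤ θ₂ / r 0 ^ 2 := by
  rw [le_div_iff₀ (pow_pos hw.apply_zero_pos 2)]
  calc r' x * r 0 ^ 2 ≤ r' x * r x ^ 2 := by
        gcongr
        exacts [(hw.deriv_pos hx).le, hw.apply_zero_pos.le, hw.apply_zero_le hx]
    _ ≤ θ₂ := by linarith [hw.le_upper x hx]

lemma apply_le (hw : PinchedWeight r r' θ₁ θ₂) (hx : x ∈ Ici 0) :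
    r x ≤ r 0 + θ₂ / r 0 ^ 2 * x := by
  have hmono : MonotoneOn (fun y => θ₂ / r 0 ^ 2 * y - r y) (Ici 0) :=
    monotoneOn_Ici_of_hasDerivAt_nonneg
      (fun y hy => ((hasDerivAt_id y).const_mul _).sub (hw.hasDerivAt y hy))
      (fun _ hy => by simpa using hw.deriv_le hy)
  have := hmono self_mem_Ici hx hx
  simp only [mul_zero, zero_sub] at this
  linarith

lemma eventually_le_mul (hw : PinchedWeight r r' θ₁ θ₂) :
    ∀ᶠ x in atTop, 0 < r x ∧ r x ≤ (r 0 + θ₂ / r 0 ^ 2) * x := by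
  filter_upwards [eventually_ge_atTop 1] with x hx
  have hx0 : x ∈ Ici (0:ℝ) := zero_le_one.trans hx
  refine ⟨hw.apply_pos hx0, ?_⟩
  nlinarith [hw.apply_le hx0, hw.apply_zero_pos]

lemma aestronglyMeasurable (hw : PinchedWeight r r' θ₁ θ₂) :
    AEStronglyMeasurable r (volume.restrict (Ioi 0)) :=
  (continuousOn_of_forall_continuousAt fun x hx =>
    (hw.hasDerivAt x (mem_Ici_of_Ioi hx)).continuousAt).aestronglyMeasurable measurableSet_Ioi

lemma aestronglyMeasurable_deriv (hw : PinchedWeight r r' θ₁ θ₂) :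
    AEStronglyMeasurable r' (volume.restrict (Ioi 0)) :=
  aestronglyMeasurable_of_forall_hasDerivAt measurableSet_Ioi fun x hx =>
    hw.hasDerivAt x (mem_Ici_of_Ioi hx)

variable {f : ℝ → ℝ}

lemma integrable_deriv_mul (hw : PinchedWeight r r' θ₁ θ₂)
    (hf : Integrable f (volume.restrict (Ioi 0))) :
    Integrable (fun x => r' x * f x) (volume.restrict (Ioi 0)) := by
  refine hf.bdd_mul (c := θ₂ / r 0 ^ 2) hw.aestronglyMeasurable_deriv ?_
  filter_upwards [ae_restrict_Ioi_mem_Ici] with x hx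
  rw [Real.norm_of_nonneg (hw.deriv_pos hx).le]
  exact hw.deriv_le hx

lemma integrable_inv_mul (hw : PinchedWeight r r' θ₁ θ₂)
    (hf : Integrable f (volume.restrict (Ioi 0))) :
    Integrable (fun x => (r x)⁻¹ * f x) (volume.restrict (Ioi 0)) := by
  have := hw.aestronglyMeasurable
  refine hf.bdd_mul (c := (r 0)⁻¹) (by fun_prop) ?_
  filter_upwards [ae_restrict_Ioi_mem_Ici] with x hx
  rw [norm_inv, Real.norm_of_nonneg (hw.apply_pos hx).le]
  exact inv_anti₀ hw.apply_zero_pos (hw.apply_zero_le hx)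

lemma integrable_inv_weight_mul (hw : PinchedWeight r r' θ₁ θ₂)
    (hf : Integrable f (volume.restrict (Ioi 0))) :
    Integrable (fun x => (r x ^ 2 * r' x)⁻¹ * f x) (volume.restrict (Ioi 0)) := by
  have := hw.aestronglyMeasurable
  have := hw.aestronglyMeasurable_deriv
  refine hf.bdd_mul (c := θ₁⁻¹) (by fun_prop) ?_
  filter_upwards [ae_restrict_Ioi_mem_Ici] with x hx
  rw [norm_inv, Real.norm_of_nonneg (hw.lower_pos.trans_le (hw.lower_le x hx)).le]
  exact inv_anti₀ hw.lower_pos (hw.lower_le x hx)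

lemma integrable_weight_mul_inv_sq_mul (hw : PinchedWeight r r' θ₁ θ₂)
    (hf : Integrable f (volume.restrict (Ioi 0))) :
    Integrable (fun x => r x ^ 2 * r' x * (r x ^ 2)⁻¹ * f x) (volume.restrict (Ioi 0)) := by
  refine (hw.integrable_deriv_mul hf).congr ?_
  filter_upwards [ae_restrict_Ioi_mem_Ici] with x hx
  rw [mul_right_comm (r x ^ 2), mul_inv_cancel₀ (pow_pos (hw.apply_pos hx) 2).ne', one_mul]

lemma hasDerivAt_mul_two_mul_sq (hw : PinchedWeight r r' θ₁ θ₂) {v v' : ℝ → ℝ}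
    (hv : HasDerivAt v (v' x) x) (hx : x ∈ Ici 0) :
    HasDerivAt (fun x => r x * (2 * v x ^ 2))
      (2 * (r' x * v x ^ 2) + 4 * ((r x)⁻¹ * (v x * (r x ^ 2 * v' x)))) x :=
  ((hw.hasDerivAt x hx).mul ((hv.fun_pow 2).const_mul 2)).congr_deriv (by
    field_simp [(hw.apply_pos hx).ne']
    ring)

end PinchedWeight

lemma inv_mul_sq_deriv_sq_mul_eq {r r' v v' : ℝ} (hr : r ≠ 0) (hr' : r' ≠ 0) :
    (r ^ 2 * r')⁻¹ * (2 * r * r' * v + r ^ 2 * v') ^ 2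
      = (r ^ 2 * r')⁻¹ * (r ^ 2 * v') ^ 2 + 2 * (r ^ 2 * r' * (r ^ 2)⁻¹ * v ^ 2)
        + (2 * (r' * v ^ 2) + 4 * (r⁻¹ * (v * (r ^ 2 * v')))) := by
  field_simp
  ring

/-- Weighted elliptic identity (Lemma 2.1, identity (div-grd)). -/
theorem weighted_elliptic_identity
    (v v' r r' : ℝ → ℝ) (θ₁ θ₂ : ℝ)
    (hv : ∀ x ∈ Ici (0:ℝ), HasDerivAt v (v' x) x)
    (hr : ∀ x ∈ Ici (0:ℝ), HasDerivAt r (r' x) x)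
    (hr0 : 0 < r 0)
    (hθ₁ : 0 < θ₁)
    (hlb : ∀ x ∈ Ici (0:ℝ), θ₁ ≤ (r x)^2 * r' x)
    (hub : ∀ x ∈ Ici (0:ℝ), (r x)^2 * r' x ≤ θ₂)
    (hvL2 : MemLp v 2 (volume.restrict (Ioi 0)))
    (hvxL2 : MemLp (fun x => (r x)^2 * v' x) 2 (volume.restrict (Ioi 0))) :
    (∫ x in Ioi (0:ℝ), ((r x)^2 * r' x)⁻¹ * (2 * r x * r' x * v x + (r x)^2 * v' x)^2)
      + 2 * r 0 * (v 0)^2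
    = (∫ x in Ioi (0:ℝ), ((r x)^2 * r' x)⁻¹ * ((r x)^2 * v' x)^2)
      + 2 * ∫ x in Ioi (0:ℝ), ((r x)^2 * r' x) * ((r x)^2)⁻¹ * (v x)^2 := by
  have hw : PinchedWeight r r' θ₁ θ₂ := ⟨hr, hr0, hθ₁, hlb, hub⟩
  have hB := hw.integrable_inv_weight_mul hvxL2.integrable_sq
  have hC := hw.integrable_weight_mul_inv_sq_mul hvL2.integrable_sq
  have hG : Integrable (fun x => 2 * (r' x * v x ^ 2) + 4 * ((r x)⁻¹ * (v x * ((r x)^2 * v' x))))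
      (volume.restrict (Ioi 0)) := ((hw.integrable_deriv_mul hvL2.integrable_sq).const_mul 2).add
    ((hw.integrable_inv_mul (hvL2.integrable_mul hvxL2)).const_mul 4)
  have hboundary := integral_Ioi_eq_neg_of_hasDerivAt_mul
    (fun x hx => hw.hasDerivAt_mul_two_mul_sq (hv x hx) hx) hG
    (hvL2.integrable_sq.const_mul 2) hw.eventually_le_mul
  have hexpand : (fun x => ((r x)^2 * r' x)⁻¹ * (2 * r x * r' x * v x + (r x)^2 * v' x)^2)
      =ᵐ[volume.restrict (Ioi 0)] fun x => ((r x)^2 * r' x)⁻¹ * ((r x)^2 * v' x)^2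
        + 2 * (((r x)^2 * r' x) * ((r x)^2)⁻¹ * (v x)^2)
        + (2 * (r' x * v x ^ 2) + 4 * ((r x)⁻¹ * (v x * ((r x)^2 * v' x)))) := by
    filter_upwards [ae_restrict_Ioi_mem_Ici] with x hx
    exact inv_mul_sq_deriv_sq_mul_eq (hw.apply_pos hx).ne' (hw.deriv_pos hx).ne'
  rw [integral_congr_ae hexpand, integral_add (hB.fun_add (hC.const_mul 2)) hG,
    integral_add hB (hC.const_mul 2), integral_const_mul, hboundary]
  ring
end

section
/- Let v ∈ H¹(0,∞) and r as above with θ̄ ≥ r²∂ₓr ≥ θ̲ > 0 and r(0) > 0. Then for every x > 0, |v(x)|² ≤ r(x)⁻² ( ‖v‖²_{L²(0,∞)} + ‖r²∂ₓv‖²_{L²(0,∞)} ). -/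
/-!
Since `r² r' > 0`, `r` is positive and increasing on `[0, ∞)`, so `r(x)² ≤ r(z)²`
for `z ≥ x`. Hence `-r(x)² (v²)' ≤ 2 |v| |r² v'| ≤ v² + (r² v')²` on `[x, ∞)`, and
integrating from `x` to `y` gives `r(x)² (v(x)² - v(y)²) ≤ ‖v‖² + ‖r² v'‖²`.
As `v²` is integrable, `v(y)²` is arbitrarily small for suitable large `y`.
-/

open MeasureTheory Set Filter

theorem frequently_atTop_lt_of_integrableOn_Ioi {g : ℝ → ℝ} {a ε : ℝ}
    (hg : IntegrableOn g (Ioi a)) (hε : 0 < ε) : ∃ᶠ y in atTop, g y < ε := by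
  by_contra h
  obtain ⟨b, hb⟩ := eventually_atTop.1 (not_frequently.1 h)
  have hconst : IntegrableOn (fun _ => ε) (Ioi (max a b)) := by
    refine (hg.mono_set (Ioi_subset_Ioi (le_max_left a b))).mono'
      aestronglyMeasurable_const ((ae_restrict_iff' measurableSet_Ioi).2 (ae_of_all _ ?_))
    intro y hy
    rw [Real.norm_of_nonneg hε.le]
    exact not_lt.1 (hb y ((le_max_right a b).trans (le_of_lt hy)))
  simp [integrableOn_const_iff, hε.ne'] at hconst

theorem neg_mul_two_mul_le_sq_add_sq {a b c w : ℝ} (hc : 0 ≤ c) (hcw : c ≤ w) :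
    -(c * (2 * a * b)) ≤ a ^ 2 + (w * b) ^ 2 := by
  rcases le_total 0 (a * b) with hab | hab
  · nlinarith [sq_nonneg a, sq_nonneg (w * b)]
  · nlinarith [sq_nonneg (a + w * b), mul_nonneg (neg_nonneg.2 hab) (sub_nonneg.2 hcw)]

theorem mul_sq_sub_sq_le_intervalIntegral {v v' w : ℝ → ℝ} {c x y : ℝ} (hxy : x ≤ y)
    (hc : 0 ≤ c) (hv : ∀ z ∈ Icc x y, HasDerivAt v (v' z) z)
    (hw : ∀ z ∈ Ioo x y, c ≤ w z)
    (hint : IntegrableOn (fun z => v z ^ 2 + (w z * v' z) ^ 2) (Icc x y)) :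
    c * (v x ^ 2 - v y ^ 2) ≤ ∫ z in x..y, v z ^ 2 + (w z * v' z) ^ 2 := by
  have hderiv : ∀ z ∈ Icc x y,
      HasDerivAt (fun t => -(c * v t ^ 2)) (-(c * (2 * v z * v' z))) z :=
    fun z hz => (((hv z hz).pow 2).const_mul c).neg.congr_deriv (by push_cast; ring)
  have := intervalIntegral.sub_le_integral_of_hasDeriv_right_of_le hxy
    (fun z hz => (hderiv z hz).continuousAt.continuousWithinAt)
    (fun z hz => (hderiv z (Ioo_subset_Icc_self hz)).hasDerivWithinAt) hint
    (fun z hz => neg_mul_two_mul_le_sq_add_sq hc (hw z hz))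
  linarith

theorem mul_sq_le_integral_Ioi {v v' w : ℝ → ℝ} {a c x : ℝ} (hax : a ≤ x) (hc : 0 ≤ c)
    (hv : ∀ z ∈ Ici x, HasDerivAt v (v' z) z) (hw : ∀ z ∈ Ioi x, c ≤ w z)
    (hv2 : IntegrableOn (fun z => v z ^ 2) (Ioi a))
    (hwv2 : IntegrableOn (fun z => (w z * v' z) ^ 2) (Ioi a)) :
    c * v x ^ 2 ≤ (∫ z in Ioi a, v z ^ 2) + ∫ z in Ioi a, (w z * v' z) ^ 2 := by
  rw [← integral_add hv2 hwv2]
  have hsub : ∀ y, Ioc x y ⊆ Ioi a := fun y z hz => hax.trans_lt hz.1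
  have hdecay : ∀ y, x ≤ y → c * (v x ^ 2 - v y ^ 2) ≤
      ∫ z in Ioi a, v z ^ 2 + (w z * v' z) ^ 2 := by
    intro y hxy
    calc c * (v x ^ 2 - v y ^ 2) ≤ ∫ z in x..y, v z ^ 2 + (w z * v' z) ^ 2 :=
          mul_sq_sub_sq_le_intervalIntegral hxy hc (fun z hz => hv z hz.1)
            (fun z hz => hw z hz.1)
            ((integrableOn_Icc_iff_integrableOn_Ioc (by finiteness)).2
              ((hv2.add hwv2).mono_set (hsub y)))
      _ = ∫ z in Ioc x y, v z ^ 2 + (w z * v' z) ^ 2 := intervalIntegral.integral_of_le hxy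
      _ ≤ _ := setIntegral_mono_set (hv2.add hwv2)
            (ae_of_all _ fun z => by positivity) (hsub y).eventuallyLE
  refine le_of_forall_pos_le_add fun ε hε => ?_
  obtain ⟨y, hy, hxy⟩ :=
    ((frequently_atTop_lt_of_integrableOn_Ioi (hv2.const_mul c) hε).and_eventually
      (eventually_ge_atTop x)).exists
  linarith [hdecay y hxy]

theorem pointwise_control_one_general
    (v v' r r' : ℝ → ℝ) (θ₁ : ℝ)
    (hv : ∀ x ∈ Ici (0:ℝ), HasDerivAt v (v' x) x)
    (hr : ∀ x ∈ Ici (0:ℝ), HasDerivAt r (r' x) x)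
    (hr0 : 0 < r 0)
    (hθ₁ : 0 < θ₁)
    (hlb : ∀ x ∈ Ici (0:ℝ), θ₁ ≤ (r x)^2 * r' x)
    (hvL2 : MemLp v 2 (volume.restrict (Ioi 0)))
    (hvxL2 : MemLp (fun x => (r x)^2 * v' x) 2 (volume.restrict (Ioi 0))) :
    ∀ x > (0:ℝ),
      (v x)^2 ≤ ((r x)^2)⁻¹ *
        ((∫ y in Ioi (0:ℝ), (v y)^2) + ∫ y in Ioi (0:ℝ), ((r y)^2 * v' y)^2) := by
  have hmono : MonotoneOn r (Ici 0) := by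
    refine monotoneOn_of_hasDerivWithinAt_nonneg (convex_Ici 0)
      (fun z hz => (hr z hz).continuousAt.continuousWithinAt)
      (fun z hz => (hr z (interior_subset hz)).hasDerivWithinAt) fun z hz => ?_
    exact (pos_of_mul_pos_right (hθ₁.trans_le (hlb z (interior_subset hz))) (sq_nonneg _)).le
  intro x hx
  have hrx : 0 < r x := hr0.trans_le (hmono self_mem_Ici hx.le hx.le)
  rw [le_inv_mul_iff₀ (by positivity)]
  refine mul_sq_le_integral_Ioi hx.le (sq_nonneg _) (fun z hz => hv z (hx.le.trans hz))
    (fun z hz => ?_) hvL2.integrable_sq hvxL2.integrable_sq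
  exact pow_le_pow_left₀ hrx.le (hmono hx.le (hx.le.trans hz.le) hz.le) 2

/-- Pointwise control, first inequality of (2.2) in Lemma 2.1. -/
theorem pointwise_control_one
    (v v' r r' : ℝ → ℝ) (θ₁ θ₂ : ℝ)
    (hv : ∀ x ∈ Ici (0:ℝ), HasDerivAt v (v' x) x)
    (hr : ∀ x ∈ Ici (0:ℝ), HasDerivAt r (r' x) x)
    (hr0 : 0 < r 0)
    (hθ₁ : 0 < θ₁)
    (hlb : ∀ x ∈ Ici (0:ℝ), θ₁ ≤ (r x)^2 * r' x)
    (hub : ∀ x ∈ Ici (0:ℝ), (r x)^2 * r' x ≤ θ₂)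
    (hvL2 : MemLp v 2 (volume.restrict (Ioi 0)))
    (hvxL2 : MemLp (fun x => (r x)^2 * v' x) 2 (volume.restrict (Ioi 0))) :
    ∀ x > (0:ℝ),
      (v x)^2 ≤ ((r x)^2)⁻¹ *
        ((∫ y in Ioi (0:ℝ), (v y)^2) + ∫ y in Ioi (0:ℝ), ((r y)^2 * v' y)^2) :=
  pointwise_control_one_general v v' r r' θ₁ hv hr hr0 hθ₁ hlb hvL2 hvxL2
end

section
/- Let v ∈ H¹(0,∞) and r as above. Then for every x > 0, |v(x)|² ≤ r(x)⁻² ( (8 r(0)⁻² θ̄² + 1) ‖v‖²_{L²} + 2 ‖∂ₓ(r²v)‖²_{L²} ). -/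
open MeasureTheory Set Filter

/-!
Write `g = r² v²`. Since `r ∂ₓr ≥ 0`,
`-∂ₓg = -2 r ∂ₓr v² - 2 v (r² ∂ₓv) ≤ v² + (r² ∂ₓv)²`, and
`(r² ∂ₓv)² = (∂ₓ(r² v) - 2 r ∂ₓr v)² ≤ 2 (∂ₓ(r² v))² + 8 (r ∂ₓr)² v²` with `r ∂ₓr ≤ θ̄ / r(0)`.
Integrating over `[x, y]` bounds `g x - g y` by the right-hand side. Finally `g` is small along a
sequence `y → ∞`: `(r³)' ≥ 3θ̲` makes `r → ∞`, while `g > ε` on a half-line would give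
`ε ∂ₓr ≤ θ̄ v²` there, so that `r` would stay bounded because `v²` is integrable.
-/

theorem sub_le_setIntegral_of_hasDerivAt_le {g g' φ : ℝ → ℝ} {a b : ℝ} {s : Set ℝ}
    (hab : a ≤ b) (hg : ∀ t ∈ Icc a b, HasDerivAt g (g' t) t) (hg' : ∀ t ∈ Ioo a b, g' t ≤ φ t)
    (hs : Ioc a b ⊆ s) (hφ : IntegrableOn φ s) (hφ₀ : ∀ t, 0 ≤ φ t) :
    g b - g a ≤ ∫ t in s, φ t :=
  calc g b - g a ≤ ∫ t in a..b, φ t :=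
        intervalIntegral.sub_le_integral_of_hasDeriv_right_of_le hab
          (fun t ht => (hg t ht).continuousAt.continuousWithinAt)
          (fun t ht => (hg t (Ioo_subset_Icc_self ht)).hasDerivWithinAt)
          ((integrableOn_Icc_iff_integrableOn_Ioc).2 (hφ.mono_set hs)) hg'
    _ = ∫ t in Ioc a b, φ t := intervalIntegral.integral_of_le hab
    _ ≤ ∫ t in s, φ t := setIntegral_mono_set hφ (ae_of_all _ hφ₀) (LE.le.eventuallyLE hs)

theorem tendsto_atTop_of_le_sq_mul_deriv {r r' : ℝ → ℝ} {a c : ℝ}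
    (hr : ∀ t ∈ Ici a, HasDerivAt r (r' t) t) (hc : 0 < c)
    (hlb : ∀ t ∈ Ici a, c ≤ r t ^ 2 * r' t) : Tendsto r atTop atTop := by
  have hcube : ∀ t ∈ Ici a, HasDerivAt (fun t => r t ^ 3) (3 * (r t ^ 2 * r' t)) t :=
    fun t ht => ((hr t ht).fun_pow 3).congr_deriv (by push_cast; ring)
  have hgrowth : ∀ t ∈ Ici a, r a ^ 3 + 3 * c * (t - a) ≤ r t ^ 3 := by
    intro t ht
    have := (convex_Ici a).mul_sub_le_image_sub_of_le_deriv (C := 3 * c)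
      (fun t ht => (hcube t ht).continuousAt.continuousWithinAt)
      (fun t ht => (hcube t (interior_subset ht)).differentiableAt.differentiableWithinAt)
      (fun t ht => by
        rw [(hcube t (interior_subset ht)).deriv]
        linarith [hlb t (interior_subset ht)])
      a self_mem_Ici t ht ht
    linarith
  have hlin : Tendsto (fun t => r a ^ 3 + 3 * c * (t - a)) atTop atTop :=
    tendsto_atTop_add_const_left _ _
      ((tendsto_atTop_add_const_right _ (-a) tendsto_id).const_mul_atTop (by positivity))
  have hcube_top : Tendsto (fun t => r t ^ 3) atTop atTop :=
    tendsto_atTop_mono' _ (eventually_ge_atTop a |>.mono hgrowth) hlin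
  exact tendsto_atTop.2 fun K => (tendsto_atTop.1 hcube_top (K ^ 3)).mono fun t ht =>
    (Odd.strictMono_pow ⟨1, rfl⟩).le_iff_le.1 ht

theorem frequently_sq_mul_sq_le {r r' v : ℝ → ℝ} {a θ ε : ℝ}
    (hr : ∀ t ∈ Ici a, HasDerivAt r (r' t) t) (hub : ∀ t ∈ Ici a, r t ^ 2 * r' t ≤ θ)
    (hθ : 0 ≤ θ) (hr_top : Tendsto r atTop atTop) (hv : IntegrableOn (fun t => v t ^ 2) (Ioi a))
    (hε : 0 < ε) : ∃ᶠ t in atTop, r t ^ 2 * v t ^ 2 ≤ ε := by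
  by_contra h
  obtain ⟨N, hN⟩ := eventually_atTop.1 (not_frequently.1 h)
  set b := max a N
  have hbounded : ∀ T ≥ b, r T - r b ≤ ∫ t in Ioi a, θ / ε * v t ^ 2 := by
    intro T hT
    refine sub_le_setIntegral_of_hasDerivAt_le hT
      (fun t ht => hr t ((le_max_left a N).trans ht.1)) (fun t ht => ?_)
      (Ioc_subset_Ioi_self.trans (Ioi_subset_Ioi (le_max_left a N))) (hv.const_mul _)
      (fun t => by positivity)
    have hεg : ε < r t ^ 2 * v t ^ 2 := not_le.1 (hN t ((le_max_right a N).trans ht.1.le))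
    have hθt := hub t ((le_max_left a N).trans ht.1.le)
    rw [div_mul_eq_mul_div, le_div_iff₀ hε]
    rcases le_or_gt (r' t) 0 with hr' | hr'
    · nlinarith [sq_nonneg (v t)]
    · nlinarith
  obtain ⟨T, hT_big, hT⟩ := ((hr_top.eventually_gt_atTop
    (r b + ∫ t in Ioi a, θ / ε * v t ^ 2)).and (eventually_ge_atTop b)).exists
  linarith [hbounded T hT]

section SqMulDerivBounds

variable {r r' : ℝ → ℝ} {a c θ : ℝ}

theorem deriv_nonneg_of_le_sq_mul_deriv (hc : 0 < c) (hlb : ∀ t ∈ Ici a, c ≤ r t ^ 2 * r' t)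
    {t : ℝ} (ht : t ∈ Ici a) : 0 ≤ r' t :=
  (pos_of_mul_pos_right (hc.trans_le (hlb t ht)) (sq_nonneg _)).le

theorem monotoneOn_of_le_sq_mul_deriv (hr : ∀ t ∈ Ici a, HasDerivAt r (r' t) t) (hc : 0 < c)
    (hlb : ∀ t ∈ Ici a, c ≤ r t ^ 2 * r' t) : MonotoneOn r (Ici a) :=
  monotoneOn_of_hasDerivWithinAt_nonneg (convex_Ici a)
    (fun t ht => (hr t ht).continuousAt.continuousWithinAt)
    (fun t ht => (hr t (interior_subset ht)).hasDerivWithinAt)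
    (fun _ ht => deriv_nonneg_of_le_sq_mul_deriv hc hlb (interior_subset ht))

theorem mul_deriv_nonneg_of_le_sq_mul_deriv (hr : ∀ t ∈ Ici a, HasDerivAt r (r' t) t)
    (hc : 0 < c) (hlb : ∀ t ∈ Ici a, c ≤ r t ^ 2 * r' t) (hra : 0 < r a) {t : ℝ}
    (ht : t ∈ Ici a) : 0 ≤ r t * r' t :=
  mul_nonneg (hra.le.trans (monotoneOn_of_le_sq_mul_deriv hr hc hlb self_mem_Ici ht ht))
    (deriv_nonneg_of_le_sq_mul_deriv hc hlb ht)

theorem mul_deriv_le_div_of_sq_mul_deriv_le (hr : ∀ t ∈ Ici a, HasDerivAt r (r' t) t)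
    (hc : 0 < c) (hlb : ∀ t ∈ Ici a, c ≤ r t ^ 2 * r' t) (hra : 0 < r a)
    (hub : ∀ t ∈ Ici a, r t ^ 2 * r' t ≤ θ) {t : ℝ} (ht : t ∈ Ici a) :
    r t * r' t ≤ θ / r a := by
  have hmono := monotoneOn_of_le_sq_mul_deriv hr hc hlb self_mem_Ici ht ht
  have hp := mul_deriv_nonneg_of_le_sq_mul_deriv hr hc hlb hra ht
  rw [le_div_iff₀ hra]
  nlinarith [mul_le_mul_of_nonneg_left hmono hp, hub t ht]

end SqMulDerivBounds

/-- Here `p`, `q` stand for `r ∂ₓr`, `r² ∂ₓv`, so that `2 p v + q = ∂ₓ(r² v)`. -/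
theorem neg_deriv_sq_mul_sq_le {p A v q : ℝ} (hp : 0 ≤ p) (hpA : p ≤ A) :
    -(2 * p * v ^ 2 + 2 * v * q) ≤ (8 * A ^ 2 + 1) * v ^ 2 + 2 * (2 * p * v + q) ^ 2 := by
  have hq : q ^ 2 ≤ 2 * (2 * p * v + q) ^ 2 + 8 * p ^ 2 * v ^ 2 := by
    nlinarith [sq_nonneg (2 * p * v + q + 2 * p * v)]
  have hpA2 : p ^ 2 ≤ A ^ 2 := pow_le_pow_left₀ hp hpA 2
  nlinarith [sq_nonneg (v + q), mul_le_mul_of_nonneg_right hpA2 (sq_nonneg v),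
    mul_nonneg hp (sq_nonneg v)]

theorem sq_mul_sq_sub_le_integral {v v' r r' : ℝ → ℝ} {a A x y : ℝ}
    (hv : ∀ t ∈ Ici a, HasDerivAt v (v' t) t) (hr : ∀ t ∈ Ici a, HasDerivAt r (r' t) t)
    (hp : ∀ t ∈ Ici a, 0 ≤ r t * r' t) (hpA : ∀ t ∈ Ici a, r t * r' t ≤ A)
    (hint : IntegrableOn (fun t => (8 * A ^ 2 + 1) * v t ^ 2
      + 2 * (2 * r t * r' t * v t + r t ^ 2 * v' t) ^ 2) (Ioi a))
    (hax : a ≤ x) (hxy : x ≤ y) :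
    r x ^ 2 * v x ^ 2 - r y ^ 2 * v y ^ 2 ≤ ∫ t in Ioi a,
      ((8 * A ^ 2 + 1) * v t ^ 2 + 2 * (2 * r t * r' t * v t + r t ^ 2 * v' t) ^ 2) := by
  have hIcc : ∀ t ∈ Icc x y, t ∈ Ici a := fun t ht => hax.trans ht.1
  have := sub_le_setIntegral_of_hasDerivAt_le (g := fun t => -(r t ^ 2 * v t ^ 2)) hxy
    (fun t ht => (((hr t (hIcc t ht)).fun_pow 2).fun_mul ((hv t (hIcc t ht)).fun_pow 2)).fun_neg)
    (fun t ht => ?_) (Ioc_subset_Ioi_self.trans (Ioi_subset_Ioi hax)) hint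
    (fun t => by positivity)
  · linarith
  · have hmem := hIcc t (Ioo_subset_Icc_self ht)
    convert neg_deriv_sq_mul_sq_le (v := v t) (q := r t ^ 2 * v' t) (hp t hmem) (hpA t hmem)
      using 1 <;> push_cast <;> ring

/-- Pointwise control, second inequality of (2.2) in Lemma 2.1. -/
theorem pointwise_control_two
    (v v' r r' : ℝ → ℝ) (θ₁ θ₂ : ℝ)
    (hv : ∀ x ∈ Ici (0:ℝ), HasDerivAt v (v' x) x)
    (hr : ∀ x ∈ Ici (0:ℝ), HasDerivAt r (r' x) x)
    (hr0 : 0 < r 0)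
    (hθ₁ : 0 < θ₁)
    (hlb : ∀ x ∈ Ici (0:ℝ), θ₁ ≤ (r x)^2 * r' x)
    (hub : ∀ x ∈ Ici (0:ℝ), (r x)^2 * r' x ≤ θ₂)
    (hvL2 : MemLp v 2 (volume.restrict (Ioi 0)))
    (hvxL2 : MemLp (fun x => 2 * r x * r' x * v x + (r x)^2 * v' x) 2
      (volume.restrict (Ioi 0))) :
    ∀ x > (0:ℝ),
      (v x)^2 ≤ ((r x)^2)⁻¹ *
        ((8 * ((r 0)^2)⁻¹ * θ₂^2 + 1) * (∫ y in Ioi (0:ℝ), (v y)^2)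
          + 2 * ∫ y in Ioi (0:ℝ), (2 * r y * r' y * v y + (r y)^2 * v' y)^2) := by
  intro x hx
  have hθ₂ : 0 ≤ θ₂ := (hθ₁.trans_le ((hlb 0 self_mem_Ici).trans (hub 0 self_mem_Ici))).le
  have hC : 8 * ((r 0)^2)⁻¹ * θ₂^2 + 1 = 8 * (θ₂ / r 0) ^ 2 + 1 := by ring
  have hv2 := hvL2.integrable_sq
  have hw2 := hvxL2.integrable_sq
  have henergy := fun y (hxy : x ≤ y) => sq_mul_sq_sub_le_integral hv hr
    (fun _ ht => mul_deriv_nonneg_of_le_sq_mul_deriv hr hθ₁ hlb hr0 ht)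
    (fun _ ht => mul_deriv_le_div_of_sq_mul_deriv_le hr hθ₁ hlb hr0 hub ht)
    ((hv2.const_mul _).add (hw2.const_mul 2)) hx.le hxy
  have hsmall : ∀ ε > 0, ∃ y ≥ x, r y ^ 2 * v y ^ 2 ≤ ε := fun ε hε =>
    ((frequently_sq_mul_sq_le hr hub hθ₂ (tendsto_atTop_of_le_sq_mul_deriv hr hθ₁ hlb)
      hv2 hε).and_eventually (eventually_ge_atTop x)).exists.imp fun _ hy => ⟨hy.2, hy.1⟩
  have key : r x ^ 2 * v x ^ 2 ≤ (8 * (θ₂ / r 0) ^ 2 + 1) * (∫ y in Ioi (0:ℝ), (v y)^2)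
      + 2 * ∫ y in Ioi (0:ℝ), (2 * r y * r' y * v y + (r y)^2 * v' y)^2 := by
    refine le_of_forall_pos_le_add fun ε hε => ?_
    obtain ⟨y, hxy, hy⟩ := hsmall ε hε
    have := henergy y hxy
    rw [integral_add (hv2.const_mul _) (hw2.const_mul 2), integral_const_mul,
      integral_const_mul] at this
    linarith
  have hrx : 0 < r x := hr0.trans_le
    (monotoneOn_of_le_sq_mul_deriv hr hθ₁ hlb self_mem_Ici hx.le hx.le)
  rw [hC, le_inv_mul_iff₀ (pow_pos hrx 2)]
  exact key
end

section
/- Let μ > 1, ξ₀ > 1, and suppose log ξ₀ ≤ κ/ε for positive κ, ε. Then for all η ∈ (1, ξ₀), (4μ²/(ξ₀ − η)) log( 1 + ((η−1)(ξ₀ − η))/(4μ² + 2μ(ξ₀ − 1)) ) ≤ C (κ/ε) (ξ₀ − η + 2μ)⁻¹ for a constant C depending only on μ. -/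
/-- Kernel bound (6.23) used to derive the Volterra inequality. -/
theorem volterra_kernel_bound (μ : ℝ) (hμ : 1 < μ) :
    ∃ C > 0, ∀ ξ₀ κ ε η : ℝ, 1 < ξ₀ → 0 < κ → 0 < ε → ε ≤ κ →
      Real.log ξ₀ ≤ κ/ε → 1 < η → η < ξ₀ →
      (4*μ^2 / (ξ₀ - η)) * Real.log (1 + ((η - 1) * (ξ₀ - η)) / (4*μ^2 + 2*μ*(ξ₀ - 1)))
        ≤ C * (κ/ε) * (ξ₀ - η + 2*μ)⁻¹ := by
  have hμ0 : 0 < μ := by linarith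
  refine ⟨4*μ^2*(1+2*μ), by positivity, ?_⟩
  intro ξ₀ κ ε η hξ₀ hκ hε hεκ hlog hη hηξ₀
  have hd0 : 0 < ξ₀ - η := by linarith
  have hA : 0 < 4*μ^2 + 2*μ*(ξ₀-1) := by nlinarith
  set d := ξ₀ - η with hd
  set A := 4*μ^2 + 2*μ*(ξ₀-1) with hAdef
  set x := (η-1)*d / A with hxdef
  have hx0 : 0 ≤ x := by
    apply div_nonneg _ hA.le
    have : 0 ≤ η - 1 := by linarith
    positivity
  have hke : 1 ≤ κ/ε := (one_le_div hε).2 hεκ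
  have hd2μ : 0 < d + 2*μ := by linarith
  have hcoef : 0 ≤ 4*μ^2/d := by positivity
  rw [show (4*μ^2*(1+2*μ)) * (κ/ε) * (d + 2*μ)⁻¹
      = (4*μ^2*(1+2*μ)) * (κ/ε) / (d + 2*μ) by ring]
  rcases le_or_gt d 1 with hcase | hcase
  · -- d ≤ 1 : use log(1+x) ≤ x
    have hlog1 : Real.log (1 + x) ≤ x := by
      have := Real.log_le_sub_one_of_pos (show 0 < 1 + x by linarith)
      linarith
    have h1 : (4*μ^2/d) * Real.log (1 + x) ≤ (4*μ^2/d) * x :=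
      mul_le_mul_of_nonneg_left hlog1 hcoef
    have h2 : (4*μ^2/d) * x = 4*μ^2*(η-1)/A := by
      rw [hxdef]; field_simp
    have h3 : 4*μ^2*(η-1)/A ≤ 2*μ := by
      rw [div_le_iff₀ hA]
      nlinarith [sq_nonneg μ, sq_nonneg (μ-1)]
    have h4 : 2*μ ≤ (4*μ^2*(1+2*μ)) * (κ/ε) / (d + 2*μ) := by
      rw [le_div_iff₀ hd2μ]
      nlinarith [mul_le_mul_of_nonneg_left hke (show (0:ℝ) ≤ 4*μ^2*(1+2*μ) by positivity)]
    calc (4*μ^2/d) * Real.log (1 + x) ≤ 2*μ := by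
          rw [h2] at h1; linarith
      _ ≤ _ := h4
  · -- 1 < d : use 1 + x ≤ ξ₀
    have hxle : x ≤ ξ₀ - 1 := by
      rw [hxdef, div_le_iff₀ hA]
      have hdle : d ≤ ξ₀ - 1 := by rw [hd]; linarith
      have h1 : (η-1)*d ≤ (ξ₀-1)*(ξ₀-1) := by nlinarith
      have h2 : (ξ₀-1)*(ξ₀-1) ≤ (ξ₀-1)*A := by
        rw [hAdef]; nlinarith [sq_nonneg μ, mul_pos hμ0 (show (0:ℝ) < ξ₀ - 1 by linarith)]
      linarith
    have hlog1 : Real.log (1 + x) ≤ κ/ε := by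
      calc Real.log (1 + x) ≤ Real.log ξ₀ :=
            Real.log_le_log (by linarith) (by linarith)
        _ ≤ κ/ε := hlog
    have h1 : (4*μ^2/d) * Real.log (1 + x) ≤ (4*μ^2/d) * (κ/ε) :=
      mul_le_mul_of_nonneg_left hlog1 hcoef
    have h2 : (4*μ^2/d) * (κ/ε) ≤ (4*μ^2*(1+2*μ)) * (κ/ε) / (d + 2*μ) := by
      have hκε : 0 < κ/ε := by linarith
      rw [div_mul_eq_mul_div, div_le_div_iff₀ hd0 hd2μ]
      nlinarith [mul_nonneg (mul_nonneg (show (0:ℝ) ≤ 4*μ^2*(κ/ε) by positivity) hμ0.le)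
        (show (0:ℝ) ≤ d - 1 by linarith)]
    linarith
end

section
/- Let μ > 1, C, ε > 0, and ξ_b > 1 with ξ_b ≃ 1. Suppose v : [1,∞) → [0,∞) satisfies the Volterra equation v(ξ) = 𝟙_{[1,ξ_b]}(ξ) + Cε ∫₁^ξ (2μ + ξ − η)⁻¹ v(η) dη. Then for all ξ ≥ ξ_b, v(ξ) ≥ 𝟙_{[1,ξ_b]}(ξ) + Cε log( 1 + (ξ_b − 1)/(2μ + ξ − ξ_b) ); in particular v(ξ) ≥ Cε (ξ_b − 1)/(2μ + ξ − ξ_b) ≥ Cε(ξ_b−1)/(2(2μ + ξ)) for large ξ, so v(ξ) cannot decay faster than ξ⁻¹ as ξ → ∞. -/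
/-!
Since the kernel and the solution are nonnegative, `v` dominates its forcing term; in particular
`v ≥ 1` on `[1, ξb]`. Feeding this back into the equation (the first Neumann iterate) gives, for
`ξ ≥ ξb`, `v ξ ≥ 𝟙 + Cε ∫₁^ξb (2μ + ξ - η)⁻¹ dη = 𝟙 + Cε log (1 + (ξb - 1) / (2μ + ξ - ξb))`,
and `log (1 + x) ≥ x / (1 + x)` turns this into the `ξ⁻¹` lower bound.
-/

open Set MeasureTheory intervalIntegral

namespace Volterra

variable {a b ξ c : ℝ} {f K v : ℝ → ℝ}

theorem forcing_le (hc : 0 ≤ c) (haξ : a ≤ ξ) (hKv : ∀ η ∈ Icc a ξ, 0 ≤ K η * v η)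
    (heq : v ξ = f ξ + c * ∫ η in a..ξ, K η * v η) : f ξ ≤ v ξ := by
  have : 0 ≤ ∫ η in a..ξ, K η * v η := integral_nonneg haξ hKv
  rw [heq]
  nlinarith

theorem forcing_add_integral_kernel_le (hc : 0 ≤ c) (hab : a ≤ b) (hbξ : b ≤ ξ)
    (hK : ∀ η ∈ Icc a ξ, 0 ≤ K η) (hv0 : ∀ η ∈ Icc a ξ, 0 ≤ v η)
    (hv1 : ∀ η ∈ Icc a b, 1 ≤ v η) (hKi : IntervalIntegrable K volume a b)
    (hKv : IntervalIntegrable (fun η => K η * v η) volume a ξ)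
    (heq : v ξ = f ξ + c * ∫ η in a..ξ, K η * v η) :
    f ξ + c * ∫ η in a..b, K η ≤ v ξ := by
  have hKv₁ : IntervalIntegrable (fun η => K η * v η) volume a b :=
    hKv.mono_set (uIcc_subset_uIcc_left (by rw [uIcc_of_le (hab.trans hbξ)]; exact ⟨hab, hbξ⟩))
  have hKv₂ : IntervalIntegrable (fun η => K η * v η) volume b ξ :=
    hKv.mono_set (uIcc_subset_uIcc_right (by rw [uIcc_of_le (hab.trans hbξ)]; exact ⟨hab, hbξ⟩))
  have hhead : ∫ η in a..b, K η ≤ ∫ η in a..b, K η * v η :=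
    integral_mono_on hab hKi hKv₁ fun η hη =>
      le_mul_of_one_le_right (hK η ⟨hη.1, hη.2.trans hbξ⟩) (hv1 η hη)
  have htail : 0 ≤ ∫ η in b..ξ, K η * v η :=
    integral_nonneg hbξ fun η hη =>
      mul_nonneg (hK η ⟨hab.trans hη.1, hη.2⟩) (hv0 η ⟨hab.trans hη.1, hη.2⟩)
  rw [heq, ← integral_add_adjacent_intervals hKv₁ hKv₂]
  gcongr
  linarith

end Volterra

theorem continuousOn_inv_sub_uIcc {s p q : ℝ} (hpq : p ≤ q) (hqs : q < s) :
    ContinuousOn (fun η => (s - η)⁻¹) (uIcc p q) :=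
  ContinuousOn.inv₀ (by fun_prop) fun η hη => by
    rw [uIcc_of_le hpq] at hη; linarith [hη.2]

theorem integral_inv_sub_eq_log_one_add {s p q : ℝ} (hpq : p ≤ q) (hqs : q < s) :
    ∫ η in p..q, (s - η)⁻¹ = Real.log (1 + (q - p) / (s - q)) := by
  rw [integral_comp_sub_left (fun u => u⁻¹) s, integral_inv_of_pos (by linarith) (by linarith)]
  congr 1
  field_simp [show s - q ≠ 0 by linarith]
  ring

theorem div_add_le_log_one_add_div {n d : ℝ} (hn : 0 ≤ n) (hd : 0 < d) :
    n / (d + n) ≤ Real.log (1 + n / d) := by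
  have hpos : 0 < 1 + n / d := by positivity
  have h := Real.one_sub_inv_le_log_of_pos hpos
  have hrw : 1 - (1 + n / d)⁻¹ = n / (d + n) := by field_simp; ring
  rwa [hrw] at h

/-- Optimality of the decay rate: a lower bound for solutions of the Volterra equation. -/
theorem volterra_lower_bound
    (μ C ε ξb : ℝ) (hμ : 1 < μ) (hC : 0 < C) (hε : 0 < ε) (hξb : 1 < ξb)
    (v : ℝ → ℝ) (hv0 : ∀ ξ ≥ (1:ℝ), 0 ≤ v ξ)
    (hint : ∀ ξ ≥ (1:ℝ), IntervalIntegrable v MeasureTheory.volume 1 ξ)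
    (heq : ∀ ξ ≥ (1:ℝ), v ξ = indicator (Icc (1:ℝ) ξb) (fun _ => (1:ℝ)) ξ
        + C*ε * ∫ η in (1:ℝ)..ξ, (2*μ + ξ - η)⁻¹ * v η) :
    (∀ ξ ≥ ξb, v ξ ≥ indicator (Icc (1:ℝ) ξb) (fun _ => (1:ℝ)) ξ
        + C*ε * Real.log (1 + (ξb - 1) / (2*μ + ξ - ξb)))
    ∧ ∃ Ξ ≥ ξb, ∀ ξ ≥ Ξ, v ξ ≥ C*ε*(ξb - 1) / (2*(2*μ + ξ)) := by
  have hCε : 0 ≤ C * ε := (mul_pos hC hε).le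
  have hK : ∀ ξ, ∀ η ∈ Icc 1 ξ, 0 ≤ (2*μ + ξ - η)⁻¹ := fun ξ η hη =>
    inv_nonneg.2 (by linarith [hη.2])
  have hv1 : ∀ η ∈ Icc 1 ξb, 1 ≤ v η := fun η hη => by
    simpa [indicator_of_mem hη] using Volterra.forcing_le hCε hη.1
      (fun t ht => mul_nonneg (hK η t ht) (hv0 t ht.1)) (heq η hη.1)
  have hlog : ∀ ξ ≥ ξb, v ξ ≥ indicator (Icc (1:ℝ) ξb) (fun _ => (1:ℝ)) ξ
      + C*ε * Real.log (1 + (ξb - 1) / (2*μ + ξ - ξb)) := fun ξ hξ => by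
    have hξ1 : 1 ≤ ξ := hξb.le.trans hξ
    have h := Volterra.forcing_add_integral_kernel_le hCε hξb.le hξ (hK ξ)
      (fun t ht => hv0 t ht.1) hv1
      (continuousOn_inv_sub_uIcc hξb.le (by linarith)).intervalIntegrable
      ((hint ξ hξ1).continuousOn_mul (continuousOn_inv_sub_uIcc hξ1 (by linarith)))
      (heq ξ hξ1)
    rwa [integral_inv_sub_eq_log_one_add hξb.le (by linarith)] at h
  refine ⟨hlog, ξb, le_rfl, fun ξ hξ => ?_⟩
  have hind : 0 ≤ indicator (Icc (1:ℝ) ξb) (fun _ => (1:ℝ)) ξ :=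
    indicator_nonneg (fun _ _ => zero_le_one) ξ
  have hdecay : (ξb - 1) / (2*(2*μ + ξ)) ≤ Real.log (1 + (ξb - 1) / (2*μ + ξ - ξb)) :=
    calc (ξb - 1) / (2*(2*μ + ξ))
        ≤ (ξb - 1) / ((2*μ + ξ - ξb) + (ξb - 1)) :=
          div_le_div_of_nonneg_left (by linarith) (by linarith) (by linarith)
      _ ≤ _ := div_add_le_log_one_add_div (by linarith) (by linarith)
  rw [mul_div_assoc]
  linarith [hlog ξ hξ, mul_le_mul_of_nonneg_left hdecay hCε]
end

section
/- Let ψ be a C² function of (x, t), and let c(x,t) > 0, r(x,t), u(x,t) be smooth with u = ∂ₜr. Set w_F = (∂ₜ − cr²∂ₓ)ψ and w_B = (∂ₜ + cr²∂ₓ)ψ. If ψ satisfies ∂ₜ²ψ − c²r²∂ₓ(r²∂ₓψ) − (2u/r)∂ₜψ + (2u²/r²)ψ = 0, then the pair (w_F/c^{1/2}, w_B/c^{1/2}) satisfies the first-order system: (∂ₜ + cr²∂ₓ)(w_F/c^{1/2}) + ((∂ₜc + cr²∂ₓc)/(2c)) (w_B/c^{1/2}) − (2u/r)(w_F/c^{1/2})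 + (2u²/r²)(ψ/c^{1/2}) = 0, and (∂ₜ − cr²∂ₓ)(w_B/c^{1/2}) + ((∂ₜc − cr²∂ₓc)/(2c)) (w_F/c^{1/2}) − (2u/r)(w_B/c^{1/2}) + (2u²/r²)(ψ/c^{1/2}) = 0. -/
/-!
Conjugation by `c^{1/2}` gives
`c^{1/2} (∂ₜ ± cr²∂ₓ)(c^{-1/2} w) = (∂ₜ ± cr²∂ₓ) w − ((∂ₜc ± cr²∂ₓc)/(2c)) w`.
Since `w_B − w_F = 2cr²∂ₓψ`, the two coefficient terms of each equation add up to minus the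
commutator term of `(∂ₜ ± cr²∂ₓ)(∂ₜ ∓ cr²∂ₓ)ψ`, so what remains is the equation of `ψ`: the term
`2cru∂ₓψ` produced by `∂ₜ(r²)` cancels against the difference between `(2u/r) w` and `(2u/r) ∂ₜψ`.
-/

/-- The forward pressure wave `w_F = (∂ₜ − cr²∂ₓ)ψ`. -/
def wF (ψt ψx c r : ℝ → ℝ → ℝ) : ℝ → ℝ → ℝ :=
  fun x t => ψt x t - c x t * (r x t)^2 * ψx x t

/-- The backward pressure wave `w_B = (∂ₜ + cr²∂ₓ)ψ`. -/
def wB (ψt ψx c r : ℝ → ℝ → ℝ) : ℝ → ℝ → ℝ :=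
  fun x t => ψt x t + c x t * (r x t)^2 * ψx x t

theorem HasDerivAt.div_sqrt {w C : ℝ → ℝ} {w' C' x : ℝ} (hw : HasDerivAt w w' x)
    (hC : HasDerivAt C C' x) (hCpos : 0 < C x) :
    HasDerivAt (fun y => w y / √(C y)) ((w' - C' / (2 * C x) * w x) / √(C x)) x := by
  have hs : √(C x) ≠ 0 := (Real.sqrt_pos.mpr hCpos).ne'
  refine (hw.div (hC.sqrt hCpos.ne') hs).congr_deriv ?_
  rw [Real.sq_sqrt hCpos.le]
  field_simp
  rw [Real.sq_sqrt hCpos.le]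
  ring

theorem HasDerivAt.mul_sq_mul {C R b : ℝ → ℝ} {C' R' b' x : ℝ} (hC : HasDerivAt C C' x)
    (hR : HasDerivAt R R' x) (hb : HasDerivAt b b' x) :
    HasDerivAt (fun y => C y * R y ^ 2 * b y)
      ((C' * R x ^ 2 + 2 * C x * R x * R') * b x + C x * R x ^ 2 * b') x :=
  ((hC.mul (hR.pow 2)).mul hb).congr_deriv (by simp only [Pi.mul_apply, Pi.pow_apply]; ring)

theorem pressure_wave_system_general
    (ψ ψt ψx ψtt ψtx ψxx c ct cx r rx u : ℝ → ℝ → ℝ)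
    (hcpos : ∀ x t, 0 < c x t) (hrpos : ∀ x t, 0 < r x t)
    -- partial derivatives of ψ (including equal mixed partials)
    (hψtt : ∀ x t, HasDerivAt (fun τ => ψt x τ) (ψtt x t) t)
    (hψtx : ∀ x t, HasDerivAt (fun y => ψt y t) (ψtx x t) x)
    (hψxt : ∀ x t, HasDerivAt (fun τ => ψx x τ) (ψtx x t) t)
    (hψxx : ∀ x t, HasDerivAt (fun y => ψx y t) (ψxx x t) x)
    -- partial derivatives of the coefficients, with u = ∂ₜr
    (hct : ∀ x t, HasDerivAt (fun τ => c x τ) (ct x t) t)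
    (hcx : ∀ x t, HasDerivAt (fun y => c y t) (cx x t) x)
    (hrt : ∀ x t, HasDerivAt (fun τ => r x τ) (u x t) t)
    (hrx : ∀ x t, HasDerivAt (fun y => r y t) (rx x t) x)
    -- the equation of ψ:  ∂ₜ²ψ − c²r²∂ₓ(r²∂ₓψ) − (2u/r)∂ₜψ + (2u²/r²)ψ = 0
    (hψeq : ∀ x t,
      ψtt x t - (c x t)^2 * (r x t)^2
          * (2 * r x t * rx x t * ψx x t + (r x t)^2 * ψxx x t)
        - (2 * u x t / r x t) * ψt x t
        + (2 * (u x t)^2 / (r x t)^2) * ψ x t = 0) :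
    ∀ x t,
      (deriv (fun τ => wF ψt ψx c r x τ / Real.sqrt (c x τ)) t
          + c x t * (r x t)^2
            * deriv (fun y => wF ψt ψx c r y t / Real.sqrt (c y t)) x
          + ((ct x t + c x t * (r x t)^2 * cx x t) / (2 * c x t))
            * (wB ψt ψx c r x t / Real.sqrt (c x t))
          - (2 * u x t / r x t) * (wF ψt ψx c r x t / Real.sqrt (c x t))
          + (2 * (u x t)^2 / (r x t)^2) * (ψ x t / Real.sqrt (c x t)) = 0)
      ∧
      (deriv (fun τ => wB ψt ψx c r x τ / Real.sqrt (c x τ)) t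
          - c x t * (r x t)^2
            * deriv (fun y => wB ψt ψx c r y t / Real.sqrt (c y t)) x
          + ((ct x t - c x t * (r x t)^2 * cx x t) / (2 * c x t))
            * (wF ψt ψx c r x t / Real.sqrt (c x t))
          - (2 * u x t / r x t) * (wB ψt ψx c r x t / Real.sqrt (c x t))
          + (2 * (u x t)^2 / (r x t)^2) * (ψ x t / Real.sqrt (c x t)) = 0) := by
  intro x t
  have hcr2ψx_t := (hct x t).mul_sq_mul (hrt x t) (hψxt x t)
  have hcr2ψx_x := (hcx x t).mul_sq_mul (hrx x t) (hψxx x t)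
  have hwF_t : HasDerivAt (fun τ => wF ψt ψx c r x τ) _ t := (hψtt x t).sub hcr2ψx_t
  have hwF_x : HasDerivAt (fun y => wF ψt ψx c r y t) _ x := (hψtx x t).sub hcr2ψx_x
  have hwB_t : HasDerivAt (fun τ => wB ψt ψx c r x τ) _ t := (hψtt x t).add hcr2ψx_t
  have hwB_x : HasDerivAt (fun y => wB ψt ψx c r y t) _ x := (hψtx x t).add hcr2ψx_x
  rw [(hwF_t.div_sqrt (hct x t) (hcpos x t)).deriv, (hwF_x.div_sqrt (hcx x t) (hcpos x t)).deriv,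
    (hwB_t.div_sqrt (hct x t) (hcpos x t)).deriv, (hwB_x.div_sqrt (hcx x t) (hcpos x t)).deriv]
  have hc := (hcpos x t).ne'
  have hr := (hrpos x t).ne'
  have hs := (Real.sqrt_pos.mpr (hcpos x t)).ne'
  have hψeq_xt := hψeq x t
  field_simp at hψeq_xt
  simp only [wF, wB]
  constructor
  · field_simp
    linear_combination 2 * c x t * hψeq_xt
  · field_simp
    linear_combination 2 * c x t * hψeq_xt

/-- The hyperbolic system (5.1)–(5.2) satisfied by `w_F/√c` and `w_B/√c`. -/
theorem pressure_wave_system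
    (ψ ψt ψx ψtt ψtx ψxx c ct cx r rx u : ℝ → ℝ → ℝ)
    (hcpos : ∀ x t, 0 < c x t) (hrpos : ∀ x t, 0 < r x t)
    -- partial derivatives of ψ (including equal mixed partials)
    (hψt : ∀ x t, HasDerivAt (fun τ => ψ x τ) (ψt x t) t)
    (hψx : ∀ x t, HasDerivAt (fun y => ψ y t) (ψx x t) x)
    (hψtt : ∀ x t, HasDerivAt (fun τ => ψt x τ) (ψtt x t) t)
    (hψtx : ∀ x t, HasDerivAt (fun y => ψt y t) (ψtx x t) x)
    (hψxt : ∀ x t, HasDerivAt (fun τ => ψx x τ) (ψtx x t) t)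
    (hψxx : ∀ x t, HasDerivAt (fun y => ψx y t) (ψxx x t) x)
    -- partial derivatives of the coefficients, with u = ∂ₜr
    (hct : ∀ x t, HasDerivAt (fun τ => c x τ) (ct x t) t)
    (hcx : ∀ x t, HasDerivAt (fun y => c y t) (cx x t) x)
    (hrt : ∀ x t, HasDerivAt (fun τ => r x τ) (u x t) t)
    (hrx : ∀ x t, HasDerivAt (fun y => r y t) (rx x t) x)
    -- the equation of ψ:  ∂ₜ²ψ − c²r²∂ₓ(r²∂ₓψ) − (2u/r)∂ₜψ + (2u²/r²)ψ = 0
    (hψeq : ∀ x t,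
      ψtt x t - (c x t)^2 * (r x t)^2
          * (2 * r x t * rx x t * ψx x t + (r x t)^2 * ψxx x t)
        - (2 * u x t / r x t) * ψt x t
        + (2 * (u x t)^2 / (r x t)^2) * ψ x t = 0) :
    ∀ x t,
      (deriv (fun τ => wF ψt ψx c r x τ / Real.sqrt (c x τ)) t
          + c x t * (r x t)^2
            * deriv (fun y => wF ψt ψx c r y t / Real.sqrt (c y t)) x
          + ((ct x t + c x t * (r x t)^2 * cx x t) / (2 * c x t))
            * (wB ψt ψx c r x t / Real.sqrt (c x t))
          - (2 * u x t / r x t) * (wF ψt ψx c r x t / Real.sqrt (c x t))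
          + (2 * (u x t)^2 / (r x t)^2) * (ψ x t / Real.sqrt (c x t)) = 0)
      ∧
      (deriv (fun τ => wB ψt ψx c r x τ / Real.sqrt (c x τ)) t
          - c x t * (r x t)^2
            * deriv (fun y => wB ψt ψx c r y t / Real.sqrt (c y t)) x
          + ((ct x t - c x t * (r x t)^2 * cx x t) / (2 * c x t))
            * (wF ψt ψx c r x t / Real.sqrt (c x t))
          - (2 * u x t / r x t) * (wB ψt ψx c r x t / Real.sqrt (c x t))
          + (2 * (u x t)^2 / (r x t)^2) * (ψ x t / Real.sqrt (c x t)) = 0) :=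
  pressure_wave_system_general ψ ψt ψx ψtt ψtx ψxx c ct cx r rx u hcpos hrpos hψtt hψtx hψxt hψxx
    hct hcx hrt hrx hψeq
end

section
/- Let X(s) = (X^{(ξ)}(s), s) solve dX^{(ξ)}/ds = −a(X^{(ξ)}(s), s) with speed a satisfying c̲ ≤ a ≤ c̄ and Lipschitz bound |∂_ξ a| ≤ Cε/ξ on {ξ ≥ 1}. Let X₁, X₂ be two such backward characteristics with X₁^{(ξ)}(0) = η₁ < η₂ = X₂^{(ξ)}(0), both staying in {ξ ≥ 1} on [0, T̃], and suppose (Cε/c̲) log(1 + c̲ T̃) ≤ Cκ. Then e^{−Cκ}(η₂ − η₁) ≤ X₂^{(ξ)}(s) − X₁^{(ξ)}(s) ≤ e^{Cκ}(η₂ − η₁) for all s ∈ [0, T̃]. -/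
/-!
Moving backward at speed at least `c̲` and ending in `{ξ ≥ 1}`, both characteristics stay above
the barrier `1 + c̲ (T̃ - s)`. There `a` is `L(s)`-Lipschitz in `ξ` with
`L(s) = Cε / (1 + c̲ (T̃ - s))`, so the gap `D = X₂ - X₁` satisfies `|D'| ≤ L |D|`, and `L` has the
antiderivative `F = -(Cε/c̲) log (1 + c̲ (T̃ - s))`, whose increase over `[0, T̃]` is at most
`(Cε/c̲) log (1 + c̲ T̃) ≤ Cκ`. Grönwall in both directions follows from the monotonicity of
`(D e^F)²` and `(D e^{-F})²`; squaring avoids knowing the sign of `D` in advance, and `D` stays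
positive because it never vanishes.
-/

open Set Real

section Monotonicity

variable {f f' : ℝ → ℝ} {a b : ℝ}

theorem monotoneOn_Icc_of_hasDerivAt_nonneg (hf : ∀ x ∈ Icc a b, HasDerivAt f (f' x) x)
    (hf' : ∀ x ∈ Icc a b, 0 ≤ f' x) : MonotoneOn f (Icc a b) :=
  monotoneOn_of_hasDerivWithinAt_nonneg (convex_Icc a b)
    (fun x hx => (hf x hx).continuousAt.continuousWithinAt)
    (fun x hx => (hf x (interior_subset hx)).hasDerivWithinAt)
    (fun x hx => hf' x (interior_subset hx))

theorem antitoneOn_Icc_of_hasDerivAt_nonpos (hf : ∀ x ∈ Icc a b, HasDerivAt f (f' x) x)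
    (hf' : ∀ x ∈ Icc a b, f' x ≤ 0) : AntitoneOn f (Icc a b) :=
  antitoneOn_of_hasDerivWithinAt_nonpos (convex_Icc a b)
    (fun x hx => (hf x hx).continuousAt.continuousWithinAt)
    (fun x hx => (hf x (interior_subset hx)).hasDerivWithinAt)
    (fun x hx => hf' x (interior_subset hx))

theorem add_mul_sub_le_of_hasDerivAt_le_neg {c s : ℝ}
    (hf : ∀ x ∈ Icc a b, HasDerivAt f (f' x) x) (hf' : ∀ x ∈ Icc a b, f' x ≤ -c)
    (hs : s ∈ Icc a b) : f b + c * (b - s) ≤ f s := by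
  have hanti : AntitoneOn (fun x => f x + c * x) (Icc a b) :=
    antitoneOn_Icc_of_hasDerivAt_nonpos
      (fun x hx => (hf x hx).add ((hasDerivAt_id x).const_mul c))
      (fun x hx => by linarith [hf' x hx])
  have := hanti hs ⟨hs.1.trans hs.2, le_rfl⟩ hs.2
  linarith

end Monotonicity

theorem abs_sub_le_div_mul_of_abs_deriv_le_div {g g' : ℝ → ℝ} {K m x y : ℝ} (hm : 0 < m)
    (hg : ∀ z, m ≤ z → HasDerivAt g (g' z) z ∧ |g' z| ≤ K / z) (hx : m ≤ x) (hy : m ≤ y) :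
    |g x - g y| ≤ K / m * |x - y| := by
  have hK : 0 ≤ K := by
    have := mul_nonneg ((abs_nonneg _).trans (hg m le_rfl).2) hm.le
    rwa [div_mul_cancel₀ _ hm.ne'] at this
  have bound : ∀ z ∈ Ici m, ‖g' z‖ ≤ K / m := fun z hz =>
    (hg z hz).2.trans (div_le_div_of_nonneg_left hK hm hz)
  simpa only [Real.norm_eq_abs] using
    (convex_Ici m).norm_image_sub_le_of_norm_hasDerivWithin_le
      (fun z hz => (hg z hz).1.hasDerivWithinAt) bound hy hx

section Gronwall

variable {D D' F L : ℝ → ℝ} {a b : ℝ}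

theorem hasDerivAt_sq_mul_exp_mul {s c : ℝ} (hD : HasDerivAt D (D' s) s)
    (hF : HasDerivAt F (L s) s) :
    HasDerivAt (fun t => (D t * exp (c * F t)) ^ 2)
      (2 * exp (c * F s) ^ 2 * (D s * D' s + c * L s * D s ^ 2)) s :=
  ((hD.fun_mul (hF.const_mul c).exp).fun_pow 2).congr_deriv (by push_cast; ring)

theorem abs_mul_le_mul_sq_of_abs_le_mul {x x' l : ℝ} (h : |x'| ≤ l * |x|) :
    |x * x'| ≤ l * x ^ 2 :=
  calc |x * x'| = |x| * |x'| := abs_mul x x'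
    _ ≤ |x| * (l * |x|) := mul_le_mul_of_nonneg_left h (abs_nonneg x)
    _ = l * x ^ 2 := by rw [← sq_abs x]; ring

theorem monotoneOn_sq_mul_exp (hD : ∀ s ∈ Icc a b, HasDerivAt D (D' s) s)
    (hF : ∀ s ∈ Icc a b, HasDerivAt F (L s) s) (hDL : ∀ s ∈ Icc a b, |D' s| ≤ L s * |D s|) :
    MonotoneOn (fun s => (D s * exp (F s)) ^ 2) (Icc a b) :=
  monotoneOn_Icc_of_hasDerivAt_nonneg
    (fun s hs => by
      simpa only [one_mul] using hasDerivAt_sq_mul_exp_mul (c := 1) (hD s hs) (hF s hs))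
    (fun s hs => mul_nonneg (by positivity) <| by
      linarith [neg_abs_le (D s * D' s), abs_mul_le_mul_sq_of_abs_le_mul (hDL s hs)])

theorem antitoneOn_sq_mul_exp_neg (hD : ∀ s ∈ Icc a b, HasDerivAt D (D' s) s)
    (hF : ∀ s ∈ Icc a b, HasDerivAt F (L s) s) (hDL : ∀ s ∈ Icc a b, |D' s| ≤ L s * |D s|) :
    AntitoneOn (fun s => (D s * exp (-F s)) ^ 2) (Icc a b) :=
  antitoneOn_Icc_of_hasDerivAt_nonpos
    (fun s hs => by
      simpa only [neg_one_mul] using hasDerivAt_sq_mul_exp_mul (c := -1) (hD s hs) (hF s hs))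
    (fun s hs => mul_nonpos_of_nonneg_of_nonpos (by positivity) <| by
      linarith [le_abs_self (D s * D' s), abs_mul_le_mul_sq_of_abs_le_mul (hDL s hs)])

theorem pos_of_abs_deriv_le_mul (hD : ∀ s ∈ Icc a b, HasDerivAt D (D' s) s)
    (hF : ∀ s ∈ Icc a b, HasDerivAt F (L s) s) (hDL : ∀ s ∈ Icc a b, |D' s| ≤ L s * |D s|)
    (ha : 0 < D a) {s : ℝ} (hs : s ∈ Icc a b) : 0 < D s := by
  have hne : ∀ t ∈ Icc a b, D t ≠ 0 := fun t ht hDt => by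
    have : (D a * exp (F a)) ^ 2 ≤ (D t * exp (F t)) ^ 2 :=
      monotoneOn_sq_mul_exp hD hF hDL ⟨le_rfl, ht.1.trans ht.2⟩ ht ht.1
    rw [hDt, zero_mul, zero_pow two_ne_zero] at this
    exact this.not_gt (pow_pos (mul_pos ha (exp_pos _)) 2)
  by_contra! hDs
  obtain ⟨t, ht, hDt⟩ := isPreconnected_Icc.intermediate_value hs ⟨le_rfl, hs.1.trans hs.2⟩
    (fun x hx => (hD x hx).continuousAt.continuousWithinAt) ⟨hDs, ha.le⟩
  exact hne t ht hDt

theorem mul_exp_sub_le_of_abs_deriv_le_mul (hD : ∀ s ∈ Icc a b, HasDerivAt D (D' s) s)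
    (hF : ∀ s ∈ Icc a b, HasDerivAt F (L s) s) (hDL : ∀ s ∈ Icc a b, |D' s| ≤ L s * |D s|)
    (ha : 0 < D a) {s : ℝ} (hs : s ∈ Icc a b) : D a * exp (F a - F s) ≤ D s := by
  have hsq := monotoneOn_sq_mul_exp hD hF hDL ⟨le_rfl, hs.1.trans hs.2⟩ hs hs.1
  have hle : D a * exp (F a) ≤ D s * exp (F s) :=
    (pow_le_pow_iff_left₀ (by positivity)
      (mul_pos (pos_of_abs_deriv_le_mul hD hF hDL ha hs) (exp_pos _)).le two_ne_zero).mp hsq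
  calc D a * exp (F a - F s) = D a * exp (F a) * exp (-F s) := by
        rw [mul_assoc, ← exp_add, sub_eq_add_neg]
    _ ≤ D s * exp (F s) * exp (-F s) := mul_le_mul_of_nonneg_right hle (exp_pos _).le
    _ = D s := by rw [mul_assoc, ← exp_add, add_neg_cancel, exp_zero, mul_one]

theorem le_mul_exp_sub_of_abs_deriv_le_mul (hD : ∀ s ∈ Icc a b, HasDerivAt D (D' s) s)
    (hF : ∀ s ∈ Icc a b, HasDerivAt F (L s) s) (hDL : ∀ s ∈ Icc a b, |D' s| ≤ L s * |D s|)
    (ha : 0 ≤ D a) {s : ℝ} (hs : s ∈ Icc a b) : D s ≤ D a * exp (F s - F a) := by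
  have hsq := antitoneOn_sq_mul_exp_neg hD hF hDL ⟨le_rfl, hs.1.trans hs.2⟩ hs hs.1
  have hle : D s * exp (-F s) ≤ D a * exp (-F a) :=
    (le_abs_self _).trans ((abs_of_nonneg (by positivity : 0 ≤ D a * exp (-F a))) ▸
      sq_le_sq.mp hsq)
  calc D s = D s * exp (-F s) * exp (F s) := by
        rw [mul_assoc, ← exp_add, neg_add_cancel, exp_zero, mul_one]
    _ ≤ D a * exp (-F a) * exp (F s) := mul_le_mul_of_nonneg_right hle (exp_pos _).le
    _ = D a * exp (F s - F a) := by rw [mul_assoc, ← exp_add, neg_add_eq_sub]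

theorem exp_neg_mul_le_and_le_exp_mul_of_abs_deriv_le_mul
    (hD : ∀ s ∈ Icc a b, HasDerivAt D (D' s) s) (hF : ∀ s ∈ Icc a b, HasDerivAt F (L s) s)
    (hDL : ∀ s ∈ Icc a b, |D' s| ≤ L s * |D s|) (ha : 0 < D a) {M s : ℝ} (hs : s ∈ Icc a b)
    (hM : F s - F a ≤ M) : exp (-M) * D a ≤ D s ∧ D s ≤ exp M * D a := by
  constructor
  · calc exp (-M) * D a ≤ exp (F a - F s) * D a := by gcongr; linarith
      _ ≤ D s := by rw [mul_comm]; exact mul_exp_sub_le_of_abs_deriv_le_mul hD hF hDL ha hs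
  · calc D s ≤ D a * exp (F s - F a) := le_mul_exp_sub_of_abs_deriv_le_mul hD hF hDL ha.le hs
      _ ≤ exp M * D a := by rw [mul_comm]; gcongr

end Gronwall

theorem hasDerivAt_neg_div_mul_log_one_add_mul_sub {K c T s : ℝ} (hc : c ≠ 0)
    (h : 0 < 1 + c * (T - s)) :
    HasDerivAt (fun t => -(K / c) * log (1 + c * (T - t))) (K / (1 + c * (T - s))) s := by
  have hinner : HasDerivAt (fun t => 1 + c * (T - t)) (-c) s := by
    simpa using (((hasDerivAt_id s).const_sub T).const_mul c).const_add 1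
  refine ((hinner.log h.ne').const_mul (-(K / c))).congr_deriv ?_
  field_simp

theorem one_add_mul_sub_le_of_hasDerivAt_neg {a : ℝ → ℝ → ℝ} {X : ℝ → ℝ} {c t₀ T s : ℝ}
    (ha : ∀ ξ t, 1 ≤ ξ → c ≤ a ξ t) (hX : ∀ t ∈ Icc t₀ T, HasDerivAt X (-(a (X t) t)) t)
    (h1 : ∀ t ∈ Icc t₀ T, 1 ≤ X t) (hs : s ∈ Icc t₀ T) : 1 + c * (T - s) ≤ X s := by
  have := add_mul_sub_le_of_hasDerivAt_le_neg hX (fun t ht => neg_le_neg (ha _ t (h1 t ht))) hs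
  linarith [h1 T ⟨hs.1.trans hs.2, le_rfl⟩]

theorem abs_sub_le_of_backward_characteristics {a a' : ℝ → ℝ → ℝ} {X₁ X₂ : ℝ → ℝ}
    {c K t₀ T t : ℝ} (hc : 0 ≤ c) (ha : ∀ ξ t, 1 ≤ ξ → c ≤ a ξ t)
    (ha' : ∀ ξ t, 1 ≤ ξ → HasDerivAt (fun y => a y t) (a' ξ t) ξ ∧ |a' ξ t| ≤ K / ξ)
    (hX₁ : ∀ t ∈ Icc t₀ T, HasDerivAt X₁ (-(a (X₁ t) t)) t)
    (hX₂ : ∀ t ∈ Icc t₀ T, HasDerivAt X₂ (-(a (X₂ t) t)) t)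
    (h1 : ∀ t ∈ Icc t₀ T, 1 ≤ X₁ t) (h2 : ∀ t ∈ Icc t₀ T, 1 ≤ X₂ t) (ht : t ∈ Icc t₀ T) :
    |a (X₁ t) t - a (X₂ t) t| ≤ K / (1 + c * (T - t)) * |X₂ t - X₁ t| := by
  have hm : 1 ≤ 1 + c * (T - t) := le_add_of_nonneg_right (mul_nonneg hc (sub_nonneg.2 ht.2))
  rw [abs_sub_comm (X₂ t)]
  exact abs_sub_le_div_mul_of_abs_deriv_le_div (one_pos.trans_le hm)
    (fun z hz => ha' z t (hm.trans hz))
    (one_add_mul_sub_le_of_hasDerivAt_neg ha hX₁ h1 ht)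
    (one_add_mul_sub_le_of_hasDerivAt_neg ha hX₂ h2 ht)

theorem characteristic_stability_general
    (a a' : ℝ → ℝ → ℝ) (cL cU C ε κ T η₁ η₂ : ℝ)
    (X₁ X₂ : ℝ → ℝ)
    (hcL : 0 < cL)
    -- speed bounds on {ξ ≥ 1}
    (hab : ∀ ξ t, 1 ≤ ξ → cL ≤ a ξ t ∧ a ξ t ≤ cU)
    -- Lipschitz bound |∂_ξ a| ≤ Cε/ξ on {ξ ≥ 1}
    (ha' : ∀ ξ t, 1 ≤ ξ →
      HasDerivAt (fun y => a y t) (a' ξ t) ξ ∧ |a' ξ t| ≤ C*ε/ξ)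
    -- the two backward characteristics
    (hX₁ : ∀ s ∈ Icc (0:ℝ) T, HasDerivAt X₁ (-(a (X₁ s) s)) s)
    (hX₂ : ∀ s ∈ Icc (0:ℝ) T, HasDerivAt X₂ (-(a (X₂ s) s)) s)
    (h1 : ∀ s ∈ Icc (0:ℝ) T, 1 ≤ X₁ s)
    (h2 : ∀ s ∈ Icc (0:ℝ) T, 1 ≤ X₂ s)
    (h0₁ : X₁ 0 = η₁) (h0₂ : X₂ 0 = η₂) (hη : η₁ < η₂)
    -- smallness:  (Cε/c̲) log(1 + c̲T̃) ≤ Cκ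
    (hκT : (C*ε/cL) * Real.log (1 + cL*T) ≤ C*κ) :
    ∀ s ∈ Icc (0:ℝ) T,
      Real.exp (-(C*κ)) * (η₂ - η₁) ≤ X₂ s - X₁ s ∧
      X₂ s - X₁ s ≤ Real.exp (C*κ) * (η₂ - η₁) := by
  intro s hs
  have hm : ∀ t ∈ Icc (0:ℝ) T, 1 ≤ 1 + cL * (T - t) := fun t ht =>
    le_add_of_nonneg_right (mul_nonneg hcL.le (sub_nonneg.2 ht.2))
  have hD : ∀ t ∈ Icc (0:ℝ) T,
      HasDerivAt (fun t => X₂ t - X₁ t) (a (X₁ t) t - a (X₂ t) t) t := fun t ht =>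
    ((hX₂ t ht).sub (hX₁ t ht)).congr_deriv (neg_sub_neg _ _)
  have hDL := fun t (ht : t ∈ Icc (0:ℝ) T) => abs_sub_le_of_backward_characteristics hcL.le
    (fun ξ t hξ => (hab ξ t hξ).1) ha' hX₁ hX₂ h1 h2 ht
  set F : ℝ → ℝ := fun t => -(C * ε / cL) * log (1 + cL * (T - t)) with hFdef
  have hF : ∀ t ∈ Icc (0:ℝ) T, HasDerivAt F (C * ε / (1 + cL * (T - t))) t := fun t ht =>
    hasDerivAt_neg_div_mul_log_one_add_mul_sub hcL.ne' (one_pos.trans_le (hm t ht))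
  have hFs : F s - F 0 ≤ C * κ := by
    have hCε : 0 ≤ C * ε := by simpa using (abs_nonneg _).trans (ha' 1 0 le_rfl).2
    have := mul_nonneg (div_nonneg hCε hcL.le) (log_nonneg (hm s hs))
    simp only [hFdef, sub_zero]
    linarith
  simpa only [h0₁, h0₂] using exp_neg_mul_le_and_le_exp_mul_of_abs_deriv_le_mul hD hF hDL
    (by simpa only [h0₁, h0₂, sub_pos] using hη) hs hFs

/-- Stability estimate for backward characteristics (used in Lemmas 6.1 and 6.4). -/
theorem characteristic_stability
    (a a' : ℝ → ℝ → ℝ) (cL cU C ε κ T η₁ η₂ : ℝ)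
    (X₁ X₂ : ℝ → ℝ)
    (hcL : 0 < cL) (hcc : cL ≤ cU) (hC : 0 < C) (hε : 0 < ε) (hκ : 0 ≤ κ) (hT : 0 ≤ T)
    -- speed bounds on {ξ ≥ 1}
    (hab : ∀ ξ t, 1 ≤ ξ → cL ≤ a ξ t ∧ a ξ t ≤ cU)
    -- Lipschitz bound |∂_ξ a| ≤ Cε/ξ on {ξ ≥ 1}
    (ha' : ∀ ξ t, 1 ≤ ξ →
      HasDerivAt (fun y => a y t) (a' ξ t) ξ ∧ |a' ξ t| ≤ C*ε/ξ)
    -- the two backward characteristics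
    (hX₁ : ∀ s ∈ Icc (0:ℝ) T, HasDerivAt X₁ (-(a (X₁ s) s)) s)
    (hX₂ : ∀ s ∈ Icc (0:ℝ) T, HasDerivAt X₂ (-(a (X₂ s) s)) s)
    (h1 : ∀ s ∈ Icc (0:ℝ) T, 1 ≤ X₁ s)
    (h2 : ∀ s ∈ Icc (0:ℝ) T, 1 ≤ X₂ s)
    (h0₁ : X₁ 0 = η₁) (h0₂ : X₂ 0 = η₂) (hη : η₁ < η₂)
    -- smallness:  (Cε/c̲) log(1 + c̲T̃) ≤ Cκ
    (hκT : (C*ε/cL) * Real.log (1 + cL*T) ≤ C*κ) :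
    ∀ s ∈ Icc (0:ℝ) T,
      Real.exp (-(C*κ)) * (η₂ - η₁) ≤ X₂ s - X₁ s ∧
      X₂ s - X₁ s ≤ Real.exp (C*κ) * (η₂ - η₁) :=
  characteristic_stability_general a a' cL cU C ε κ T η₁ η₂ X₁ X₂ hcL hab ha' hX₁ hX₂ h1 h2 h0₁ h0₂
    hη hκT
end

section
/- Under the bootstrap hypotheses |q| ≤ 1/2 pointwise, |R − 1| ≲ ε, |q(x,t)| ≲ ε ξ⁻¹ with ξ = (1+3x)^{1/3}, and ‖q(t)‖_{L²} ≲ ε, the radius function r(x,t) = (R(t)³ + 3x + 3∫₀ˣ q(y,t) dy)^{1/3} satisfies | r(x,t)²/ξ² − 1 | ≤ C ε ξ^{−3/2} for all x > 0, for a constant C independent of x, t, ε. -/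
open MeasureTheory Set

/-!
With `b = 1 + 3x = ξ³` and `A = R³ + 3x + 3∫₀ˣ q`, the quantity is `(A/b)^{2/3} - 1`,
and `|u^{2/3} - 1| ≤ |u - 1|`. Now `A - b = (R³ - 1) + 3∫₀ˣ q`, where `|R³ - 1| ≲ ε`
and, by Cauchy–Schwarz, `|∫₀ˣ q| ≤ √x ‖q‖_{L²} ≲ ε √b`; hence
`|A/b - 1| ≲ ε b^{-1/2} = ε ξ^{-3/2}`.
-/

lemma abs_rpow_sub_one_le_abs_sub_one {u p : ℝ} (hu : 0 ≤ u) (hp₀ : 0 ≤ p) (hp₁ : p ≤ 1) :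
    |u ^ p - 1| ≤ |u - 1| := by
  rcases le_total u 1 with h | h
  · have h₁ := Real.self_le_rpow_of_le_one hu h hp₁
    have h₂ := Real.rpow_le_one hu h hp₀
    rw [abs_of_nonpos (by linarith), abs_of_nonpos (by linarith)]
    linarith
  · have h₁ := Real.rpow_le_self_of_one_le h hp₁
    have h₂ := Real.one_le_rpow h hp₀
    rw [abs_of_nonneg (by linarith), abs_of_nonneg (by linarith)]
    linarith

lemma abs_pow_three_sub_one_le {a m : ℝ} (ha : |a - 1| ≤ m) (hm : m ≤ 1 / 2) :
    |a ^ 3 - 1| ≤ 19 / 4 * m := by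
  obtain ⟨ha₁, ha₂⟩ := abs_le.mp ha
  have hsum : |a ^ 2 + a + 1| ≤ 19 / 4 := by
    rw [abs_of_nonneg (by nlinarith)]
    nlinarith
  calc |a ^ 3 - 1| = |a - 1| * |a ^ 2 + a + 1| := by rw [← abs_mul]; ring_nf
    _ ≤ m * (19 / 4) := mul_le_mul ha hsum (abs_nonneg _) (by linarith [abs_nonneg (a - 1)])
    _ = 19 / 4 * m := mul_comm _ _

lemma abs_integral_le_sqrt_measureReal_mul_sqrt_integral_sq {α : Type*} [MeasurableSpace α]
    {μ : Measure α} [IsFiniteMeasure μ] {f : α → ℝ} (hf : MemLp f 2 μ) :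
    |∫ a, f a ∂μ| ≤ √(μ.real univ) * √(∫ a, f a ^ 2 ∂μ) := by
  have holder := integral_mul_le_Lp_mul_Lq_of_nonneg (μ := μ) Real.HolderConjugate.two_two
    (.of_forall fun a => abs_nonneg (f a)) (.of_forall fun _ => zero_le_one)
    (by rw [ENNReal.ofReal_ofNat]; exact hf.abs) (by simpa using memLp_const (1 : ℝ))
  have h2 : ∀ g : α → ℝ, (∫ a, g a ^ (2:ℝ) ∂μ) ^ (1 / (2:ℝ)) = √(∫ a, g a ^ 2 ∂μ) := by
    intro g; simp [Real.sqrt_eq_rpow]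
  rw [h2, h2] at holder
  simp only [mul_one, sq_abs, one_pow, integral_const, smul_eq_mul] at holder
  calc |∫ a, f a ∂μ| ≤ ∫ a, |f a| ∂μ := abs_integral_le_integral_abs
    _ ≤ _ := by rw [mul_comm]; exact holder

lemma abs_intervalIntegral_le_mul_sqrt {f : ℝ → ℝ} {B x : ℝ}
    (hf : AEStronglyMeasurable f (volume.restrict (Ioi 0)))
    (hf₂ : IntegrableOn (fun y => f y ^ 2) (Ioi 0)) (hB : ∫ y in Ioi 0, f y ^ 2 ≤ B ^ 2)
    (hB₀ : 0 ≤ B) (hx : 0 ≤ x) :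
    |∫ y in (0:ℝ)..x, f y| ≤ B * √x := by
  have hf_Ioc : MemLp f 2 (volume.restrict (Ioc 0 x)) :=
    (memLp_two_iff_integrable_sq (hf.mono_set Ioc_subset_Ioi_self)).2
      (hf₂.mono_set Ioc_subset_Ioi_self)
  have hsq : ∫ y in Ioc 0 x, f y ^ 2 ≤ B ^ 2 :=
    (setIntegral_mono_set hf₂ (.of_forall fun _ => sq_nonneg _)
      Ioc_subset_Ioi_self.eventuallyLE).trans hB
  rw [intervalIntegral.integral_of_le hx]
  calc |∫ y in Ioc 0 x, f y|
        ≤ √((volume.restrict (Ioc 0 x)).real univ) * √(∫ y in Ioc 0 x, f y ^ 2) :=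
        abs_integral_le_sqrt_measureReal_mul_sqrt_integral_sq hf_Ioc
    _ ≤ √x * B := by
        gcongr
        · simp [hx]
        · exact Real.sqrt_le_iff.mpr ⟨hB₀, hsq⟩
    _ = B * √x := mul_comm _ _

lemma abs_div_sub_one_le_of_abs_sub_le_mul_sqrt {a b c : ℝ} (hb : 0 < b)
    (h : |a - b| ≤ c * √b) : |a / b - 1| ≤ c * b ^ (-(1 / 2) : ℝ) := by
  rw [div_sub_one hb.ne', abs_div, abs_of_pos hb, div_le_iff₀ hb, mul_assoc,
    ← Real.rpow_add_one hb.ne']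
  norm_num [← Real.sqrt_eq_rpow, h]

lemma abs_add_three_mul_div_sub_one_le {a I x c d : ℝ} (hx : 0 ≤ x) (hc : 0 ≤ c) (hd : 0 ≤ d)
    (ha : |a - 1| ≤ c) (hI : |I| ≤ d * √x) :
    |(a + 3 * x + 3 * I) / (1 + 3 * x) - 1| ≤ (c + 3 * d) * (1 + 3 * x) ^ (-(1 / 2) : ℝ) := by
  refine abs_div_sub_one_le_of_abs_sub_le_mul_sqrt (by positivity) ?_
  have h_one : 1 ≤ √(1 + 3 * x) := Real.one_le_sqrt.mpr (by linarith)
  have h_x : √x ≤ √(1 + 3 * x) := Real.sqrt_le_sqrt (by linarith)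
  calc |a + 3 * x + 3 * I - (1 + 3 * x)| = |(a - 1) + 3 * I| := by ring_nf
    _ ≤ |a - 1| + 3 * |I| := by simpa [abs_mul] using abs_add_le (a - 1) (3 * I)
    _ ≤ c * √(1 + 3 * x) + 3 * (d * √(1 + 3 * x)) := by
        gcongr
        · exact ha.trans (le_mul_of_one_le_right hc h_one)
        · exact hI.trans (by gcongr)
    _ = (c + 3 * d) * √(1 + 3 * x) := by ring

lemma rpow_pow_div_rpow_pow {a b : ℝ} (ha : 0 ≤ a) (hb : 0 ≤ b) (p : ℝ) (n : ℕ) :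
    (a ^ p) ^ n / (b ^ p) ^ n = (a / b) ^ (p * n) := by
  rw [← div_pow, ← Real.div_rpow ha hb, ← Real.rpow_mul_natCast (div_nonneg ha hb)]

/-- Estimate (3.8): under the bootstrap hypotheses, `|r²/ξ² − 1| ≲ ε ξ^{−3/2}`. -/
theorem radius_ratio_estimate (K : ℝ) (hK : 0 < K) :
    ∃ C > 0, ∀ (ε : ℝ) (q : ℝ → ℝ → ℝ) (R : ℝ → ℝ),
      0 < ε → K * ε ≤ 1/2 →
      (∀ t, Measurable (fun x => q x t)) →
      (∀ x t, |q x t| ≤ 1/2) →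
      (∀ t, |R t - 1| ≤ K * ε) →
      (∀ x t, 0 < x → |q x t| ≤ K * ε * (((1 + 3*x) ^ ((1:ℝ)/3)))⁻¹) →
      (∀ t, Integrable (fun x => (q x t)^2) (volume.restrict (Ioi 0))) →
      (∀ t, (∫ x in Ioi (0:ℝ), (q x t)^2) ≤ (K*ε)^2) →
      ∀ x t, 0 < x →
        |(((R t)^3 + 3*x + 3 * ∫ y in (0:ℝ)..x, q y t) ^ ((1:ℝ)/3))^2
            / ((1 + 3*x) ^ ((1:ℝ)/3))^2 - 1|
          ≤ C * ε * (((1 + 3*x) ^ ((1:ℝ)/3)) ^ (-(3:ℝ)/2)) := by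
  refine ⟨8 * K, by positivity, ?_⟩
  intro ε q R hε hKε hmeas hq_half hR _ hint hL2 x t hx
  set I := ∫ y in (0:ℝ)..x, q y t
  have hb : 0 < 1 + 3 * x := by linarith
  have hI : |I| ≤ K * ε * √x := abs_intervalIntegral_le_mul_sqrt
    (hmeas t).aestronglyMeasurable (hint t) (hL2 t) (by positivity) hx.le
  have hA : 0 ≤ R t ^ 3 + 3 * x + 3 * I := by
    -- the L² bound alone does not keep the radicand nonnegative for small `x`
    have hI_half : |I| ≤ 1 / 2 * x := by
      simpa [abs_of_pos hx] using intervalIntegral.norm_integral_le_of_norm_le_const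
        (a := 0) (b := x) (f := fun y => q y t) fun y _ => hq_half y t
    have hR_half : 1 / 2 ≤ R t := by linarith [(abs_le.mp ((hR t).trans hKε)).1]
    nlinarith [(abs_le.mp hI_half).1, pow_le_pow_left₀ (by norm_num) hR_half 3]
  have hξ : ((1 + 3 * x) ^ ((1:ℝ)/3)) ^ (-(3:ℝ)/2) = (1 + 3 * x) ^ (-(1 / 2) : ℝ) := by
    rw [← Real.rpow_mul hb.le]; norm_num
  rw [rpow_pow_div_rpow_pow hA hb.le, hξ]
  calc _ ≤ |(R t ^ 3 + 3 * x + 3 * I) / (1 + 3 * x) - 1| :=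
        abs_rpow_sub_one_le_abs_sub_one (div_nonneg hA hb.le) (by norm_num) (by norm_num)
    _ ≤ (19 / 4 * (K * ε) + 3 * (K * ε)) * (1 + 3 * x) ^ (-(1 / 2) : ℝ) :=
        abs_add_three_mul_div_sub_one_le hx.le (by positivity) (by positivity)
          (abs_pow_three_sub_one_le (hR t) hKε) hI
    _ ≤ 8 * K * ε * (1 + 3 * x) ^ (-(1 / 2) : ℝ) := by
        gcongr ?_ * _
        linarith [mul_pos hK hε]
end

section
/- Let φ satisfy the inhomogeneous wave equation ∂ₜ²φ − c²∂ₓ(r⁴∂ₓφ) = F on x > 0, and for weight functions A(x,t), B(x,t) define P₀ = A ∂ₜφ · cr²∂ₓφ + (1/2) B φ ∂ₜφ and P₁ = (1/2) A [(∂ₜφ)² + (cr²∂ₓφ)²] + (1/2) B φ · cr²∂ₓφ − (1/4) cr² (∂ₓB) φ². Then ∂ₓ(cr²P₁) − ∂ₜP₀ = ( (1/2)∂ₓ(cr²A) − B/2 )(∂ₜφ)² + ( (1/2)∂ₓ(cr²A) − A c ∂ₓr² + B/2 )(cr²∂ₓφ)² − (1/4) ∂ₓ(c²r⁴∂ₓB)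 φ² + A (r²∂ₓc)(cr²∂ₓφ)² − A (∂ₜ(cr²)/(cr²)) ∂ₜφ · cr²∂ₓφ + B (r²∂ₓc) φ · cr²∂ₓφ − (A cr²∂ₓφ + (1/2)Bφ) F − (∂ₜA) ∂ₜφ · cr²∂ₓφ − (1/2)(∂ₜB) φ ∂ₜφ. -/
/-!
Expand both derivatives by the product rule. The terms containing `∂ₜ²φ` and
`∂ₓ(r⁴∂ₓφ) = r⁴∂ₓ²φ + 4r³(∂ₓr)∂ₓφ` then assemble into the multiplier
`(A·cr²∂ₓφ + ½Bφ)(∂ₜ²φ − c²∂ₓ(r⁴∂ₓφ))`, which the wave equation turns into the `F`-term;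
everything else cancels identically, once `∂ₜ(cr²∂ₓφ)` is rewritten through `∂ₜ(cr²)/(cr²)`.
-/

section

variable {f g : ℝ → ℝ} {f' g' x : ℝ}

theorem HasDerivAt.mul_sq (hf : HasDerivAt f f' x) (hg : HasDerivAt g g' x) :
    HasDerivAt (fun y => f y * g y ^ 2) (f' * g x ^ 2 + 2 * f x * g x * g') x :=
  (hf.fun_mul (hg.fun_pow 2)).congr_deriv (by push_cast; ring)

end

section

variable {c r A B Bx φ φt φx : ℝ → ℝ} {s w' G' A' B' Bx' φ' φt' φx' : ℝ}

theorem hasDerivAt_kss_flux (hw : HasDerivAt (fun y => c y * r y ^ 2) w' s)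
    (hG : HasDerivAt (fun y => c y * r y ^ 2 * φx y) G' s)
    (hA : HasDerivAt A A' s) (hB : HasDerivAt B B' s) (hBx : HasDerivAt Bx Bx' s)
    (hφ : HasDerivAt φ φ' s) (hφt : HasDerivAt φt φt' s) :
    HasDerivAt (fun y => c y * r y ^ 2 *
        ((1/2) * A y * (φt y ^ 2 + (c y * r y ^ 2 * φx y) ^ 2)
          + (1/2) * B y * φ y * (c y * r y ^ 2 * φx y)
          - (1/4) * c y * r y ^ 2 * Bx y * φ y ^ 2))
      (w' * ((1/2) * A s * (φt s ^ 2 + (c s * r s ^ 2 * φx s) ^ 2)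
          + (1/2) * B s * φ s * (c s * r s ^ 2 * φx s)
          - (1/4) * c s * r s ^ 2 * Bx s * φ s ^ 2)
        + c s * r s ^ 2 *
          ((1/2) * A' * (φt s ^ 2 + (c s * r s ^ 2 * φx s) ^ 2)
            + A s * (φt s * φt' + c s * r s ^ 2 * φx s * G')
            + (1/2) * (B' * φ s + B s * φ') * (c s * r s ^ 2 * φx s)
            + (1/2) * B s * φ s * G'
            - (1/4) * (w' * Bx s + c s * r s ^ 2 * Bx') * φ s ^ 2
            - (1/2) * c s * r s ^ 2 * Bx s * φ s * φ')) s := by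
  have hquarter := ((hw.const_mul (1/4 : ℝ)).fun_mul hBx).fun_mul (hφ.fun_pow 2)
  simp only [← mul_assoc] at hquarter
  have henergy := (hA.const_mul (1/2 : ℝ)).fun_mul ((hφt.fun_pow 2).fun_add (hG.fun_pow 2))
  have hcross := ((hB.const_mul (1/2 : ℝ)).fun_mul hφ).fun_mul hG
  refine (hw.fun_mul ((henergy.fun_add hcross).fun_sub hquarter)).congr_deriv ?_
  push_cast
  ring

theorem hasDerivAt_kss_momentum (hw : HasDerivAt (fun τ => c τ * r τ ^ 2) w' s)
    (hA : HasDerivAt A A' s) (hB : HasDerivAt B B' s) (hφ : HasDerivAt φ φ' s)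
    (hφt : HasDerivAt φt φt' s) (hφx : HasDerivAt φx φx' s) :
    HasDerivAt (fun τ => A τ * φt τ * (c τ * r τ ^ 2 * φx τ) + (1/2) * B τ * φ τ * φt τ)
      (A' * φt s * (c s * r s ^ 2 * φx s) + A s * φt' * (c s * r s ^ 2 * φx s)
        + A s * φt s * (w' * φx s + c s * r s ^ 2 * φx')
        + (1/2) * B' * φ s * φt s + (1/2) * B s * φ' * φt s + (1/2) * B s * φ s * φt') s :=
  (((hA.fun_mul hφt).fun_mul (hw.fun_mul hφx)).fun_add
    (((hB.const_mul (1/2 : ℝ)).fun_mul hφ).fun_mul hφt)).congr_deriv (by ring)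

end

/-- The pointwise divergence identity of Appendix A underlying the KSS-type estimate. -/
theorem kss_divergence_identity
    (φ φt φx φtt φtx φxx c ct cx r rt rx A At Ax B Bt Bx Bxx F D : ℝ → ℝ → ℝ)
    (hcpos : ∀ x t, 0 < c x t) (hrpos : ∀ x t, 0 < r x t)
    -- partial derivatives of φ (with equal mixed partials)
    (hφt : ∀ x t, HasDerivAt (fun τ => φ x τ) (φt x t) t)
    (hφx : ∀ x t, HasDerivAt (fun y => φ y t) (φx x t) x)
    (hφtt : ∀ x t, HasDerivAt (fun τ => φt x τ) (φtt x t) t)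
    (hφtx : ∀ x t, HasDerivAt (fun y => φt y t) (φtx x t) x)
    (hφxt : ∀ x t, HasDerivAt (fun τ => φx x τ) (φtx x t) t)
    (hφxx : ∀ x t, HasDerivAt (fun y => φx y t) (φxx x t) x)
    -- partial derivatives of the coefficients and weights
    (hct : ∀ x t, HasDerivAt (fun τ => c x τ) (ct x t) t)
    (hcx : ∀ x t, HasDerivAt (fun y => c y t) (cx x t) x)
    (hrt : ∀ x t, HasDerivAt (fun τ => r x τ) (rt x t) t)
    (hrx : ∀ x t, HasDerivAt (fun y => r y t) (rx x t) x)
    (hAt : ∀ x t, HasDerivAt (fun τ => A x τ) (At x t) t)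
    (hAx : ∀ x t, HasDerivAt (fun y => A y t) (Ax x t) x)
    (hBt : ∀ x t, HasDerivAt (fun τ => B x τ) (Bt x t) t)
    (hBx : ∀ x t, HasDerivAt (fun y => B y t) (Bx x t) x)
    (hBxx : ∀ x t, HasDerivAt (fun y => Bx y t) (Bxx x t) x)
    -- D = ∂ₓ(r⁴∂ₓφ) and the inhomogeneous wave equation ∂ₜ²φ − c²∂ₓ(r⁴∂ₓφ) = F
    (hD : ∀ x t, HasDerivAt (fun y => (r y t)^4 * φx y t) (D x t) x)
    (hwave : ∀ x t, φtt x t - (c x t)^2 * D x t = F x t) :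
    ∀ x t,
      -- ∂ₓ(cr²P₁) − ∂ₜP₀
      deriv (fun y => c y t * (r y t)^2 *
          ((1/2) * A y t * ((φt y t)^2 + (c y t * (r y t)^2 * φx y t)^2)
            + (1/2) * B y t * φ y t * (c y t * (r y t)^2 * φx y t)
            - (1/4) * c y t * (r y t)^2 * Bx y t * (φ y t)^2)) x
      - deriv (fun τ =>
          A x τ * φt x τ * (c x τ * (r x τ)^2 * φx x τ)
            + (1/2) * B x τ * φ x τ * φt x τ) t
      =
      ((1/2) * deriv (fun y => c y t * (r y t)^2 * A y t) x - B x t / 2) * (φt x t)^2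
      + ((1/2) * deriv (fun y => c y t * (r y t)^2 * A y t) x
          - A x t * c x t * deriv (fun y => (r y t)^2) x + B x t / 2)
        * (c x t * (r x t)^2 * φx x t)^2
      - (1/4) * deriv (fun y => (c y t)^2 * (r y t)^4 * Bx y t) x * (φ x t)^2
      + A x t * ((r x t)^2 * cx x t) * (c x t * (r x t)^2 * φx x t)^2
      - A x t * (deriv (fun τ => c x τ * (r x τ)^2) t / (c x t * (r x t)^2))
          * φt x t * (c x t * (r x t)^2 * φx x t)
      + B x t * ((r x t)^2 * cx x t) * φ x t * (c x t * (r x t)^2 * φx x t)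
      - (A x t * c x t * (r x t)^2 * φx x t + (1/2) * B x t * φ x t) * F x t
      - At x t * φt x t * (c x t * (r x t)^2 * φx x t)
      - (1/2) * Bt x t * φ x t * φt x t := by
  intro x t
  have hw_x := (hcx x t).mul_sq (hrx x t)
  have hw_t := (hct x t).mul_sq (hrt x t)
  have hr4_x := (hrx x t).fun_pow 4
  have hD' : D x t = _ := (hD x t).unique (hr4_x.fun_mul (hφxx x t))
  have hw : c x t * r x t ^ 2 ≠ 0 := (mul_pos (hcpos x t) (pow_pos (hrpos x t) 2)).ne'
  have hquot : (ct x t * r x t ^ 2 + 2 * c x t * r x t * rt x t) / (c x t * r x t ^ 2)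
      * (c x t * r x t ^ 2 * φx x t)
      = (ct x t * r x t ^ 2 + 2 * c x t * r x t * rt x t) * φx x t := by
    rw [← mul_assoc, div_mul_cancel₀ _ hw]
  rw [(hasDerivAt_kss_flux hw_x (hw_x.fun_mul (hφxx x t)) (hAx x t) (hBx x t) (hBxx x t)
      (hφx x t) (hφtx x t)).deriv,
    (hasDerivAt_kss_momentum hw_t (hAt x t) (hBt x t) (hφt x t) (hφtt x t) (hφxt x t)).deriv,
    (hw_x.fun_mul (hAx x t)).deriv, ((hrx x t).fun_pow 2).deriv,
    ((((hcx x t).fun_pow 2).fun_mul hr4_x).fun_mul (hBxx x t)).deriv, hw_t.deriv]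
  linear_combination -(A x t * c x t * r x t ^ 2 * φx x t + 1/2 * B x t * φ x t)
      * (hwave x t + c x t ^ 2 * hD')
    + A x t * φt x t * hquot
end
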